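/- arXiv:1011.0366 — 3 statements merged into one kernel-verified Lean document; each statement's English description precedes it below -/
import Mathlib

section
/- The number of standard Young tableaux of shifted shape λ = (λ1, ..., λm) with λ1 > λ2 > ... > λm > 0 equals |λ|! divided by the product of λi!, times the product over 1 ≤ i < j ≤ m of (λi - λj)/(λi + λj). -/
/-
Removing the cell that holds the largest entry of a standard tableau shows that the number of
tableaux of a shifted shape `λ` is the sum of the numbers for the shapes obtained by deleting one
corner. It therefore suffices that `g(λ) = |λ|! ∏_{i<j} (λᵢ - λⱼ) / (∏ λᵢ! ∏_{i<j} (λᵢ + λⱼ))`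
satisfies the same recursion. Deleting the last cell of row `i` multiplies `g` by
`(λᵢ / |λ|) ∏_{j≠i} (uᵢ - wⱼ) / (uᵢ - uⱼ)` with `u = λ(λ - 1)`, `w = λ(λ + 1)` (and gives `0`
when the row is not removable), and these factors sum to one: since `λᵢ = -(uᵢ - wᵢ) / 2`, the sum
is `-1 / (2|λ|)` times the divided difference at the nodes `u` of `∏ⱼ (X - wⱼ) - ∏ⱼ (X - uⱼ)`, a
polynomial of degree `< m` whose coefficient of `X^(m-1)` is `∑ u - ∑ w = -2|λ|`.
-/

open Finset

/-- Cells of the ordinary Young diagram with row lengths given by the list `L`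
(row `i`, columns `0,…,L_i-1`). -/
def shapeCells (L : List ℕ) : Finset (ℕ × ℕ) :=
  (Finset.range L.length).biUnion fun i =>
    (Finset.range (L.getD i 0)).image fun j => (i, j)

/-- Cells of the shifted Young diagram with row lengths `L` (row `i` indented `i` places). -/
def shiftedCells (L : List ℕ) : Finset (ℕ × ℕ) :=
  (Finset.range L.length).biUnion fun i =>
    (Finset.range (L.getD i 0)).image fun j => (i, i + j)

/-- `T` is a standard Young tableau filling of the cell set `S`: a bijection onto
`{1,…,|S|}`, zero outside `S`, increasing along rows and down columns. -/
def IsSYT (S : Finset (ℕ × ℕ)) (T : ℕ × ℕ → ℕ) : Prop :=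
  Set.BijOn T ↑S (Set.Icc 1 S.card) ∧ (∀ c, c ∉ S → T c = 0) ∧
  (∀ c ∈ S, (c.1, c.2 + 1) ∈ S → T c < T (c.1, c.2 + 1)) ∧
  (∀ c ∈ S, (c.1 + 1, c.2) ∈ S → T c < T (c.1 + 1, c.2))

/-- A standard Young tableau which moreover increases down the main diagonal. -/
def IsSYTD (S : Finset (ℕ × ℕ)) (T : ℕ × ℕ → ℕ) : Prop :=
  IsSYT S T ∧ ∀ c ∈ S, c.1 = c.2 → (c.1 + 1, c.2 + 1) ∈ S → T c < T (c.1 + 1, c.2 + 1)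

/-- The number of standard Young tableaux of a given cell set. -/
noncomputable def numSYT (S : Finset (ℕ × ℕ)) : ℕ :=
  Nat.card {T : ℕ × ℕ → ℕ // IsSYT S T}

/-- The number of standard Young tableaux (with the diagonal condition) of a cell set. -/
noncomputable def numSYTD (S : Finset (ℕ × ℕ)) : ℕ :=
  Nat.card {T : ℕ × ℕ → ℕ // IsSYTD S T}

/-- The staircase list `(m, m-1, …, 1)`. -/
def stair (m : ℕ) : List ℕ := (List.range m).map fun i => m - i

/-- Sort a finite set of parts into a strictly decreasing list. -/
def sortDesc (s : Finset ℕ) : List ℕ := (s.sort (· ≤ ·)).reverse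

/-- Number of SYT of the shifted shape whose set of parts is `s`. -/
noncomputable def gF (s : Finset ℕ) : ℕ := numSYT (shiftedCells (sortDesc s))

/-- Number of SYT of the ordinary shape with row lengths `L`. -/
noncomputable def fL (L : List ℕ) : ℕ := numSYT (shapeCells L)

noncomputable def hg (s : Finset ℕ) : ℚ := (gF s : ℚ) / ((s.sum id).factorial : ℚ)

noncomputable def hf (L : List ℕ) : ℚ := (fL L : ℚ) / ((L.sum).factorial : ℚ)

/-- Superfactorial `F_j = 0! 1! ⋯ (j-1)!`. -/
def sf (j : ℕ) : ℕ := ∏ i ∈ Finset.range j, i.factorial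

/-- The partition `μ + (c^k)`, as a list of `k` parts. -/
def addc (MU : List ℕ) (k c : ℕ) : List ℕ := (List.range k).map fun i => MU.getD i 0 + c

/-- The partition with `m` parts whose associated strict partition `λ + (m,…,1)`
has set of parts `s`. -/
def partOf (m : ℕ) (s : Finset ℕ) : List ℕ :=
  (List.range m).map fun i => (sortDesc s).getD i 0 - (m - i)

open Function
open scoped Nat

section CornerRecursion

variable {S : Finset (ℕ × ℕ)} {T : ℕ × ℕ → ℕ} {c : ℕ × ℕ}

def corners (S : Finset (ℕ × ℕ)) : Finset (ℕ × ℕ) :=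
  S.filter fun c => (c.1, c.2 + 1) ∉ S ∧ (c.1 + 1, c.2) ∉ S

theorem IsSYT.mem_Icc (hT : IsSYT S T) (hc : c ∈ S) : T c ∈ Set.Icc 1 #S :=
  hT.1.1 (mem_coe.2 hc)

instance finite_isSYT (S : Finset (ℕ × ℕ)) : Finite {T : ℕ × ℕ → ℕ // IsSYT S T} := by
  refine Finite.of_injective
    (fun T : {T // IsSYT S T} => fun c : S => (⟨T.1 c, Nat.lt_succ_of_le (T.2.mem_Icc c.2).2⟩ :
      Fin (#S + 1))) fun T T' h => Subtype.ext <| funext fun c => ?_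
  by_cases hc : c ∈ S
  · exact congrArg Fin.val (congrFun h ⟨c, hc⟩)
  · rw [T.2.2.1 c hc, T'.2.2.1 c hc]

theorem numSYT_empty : numSYT ∅ = 1 := by
  refine Nat.card_eq_one_iff_exists.2 ⟨⟨fun _ => 0, ?_, fun _ _ => rfl, by simp, by simp⟩,
    fun T => Subtype.ext <| funext fun c => T.2.2.1 c (notMem_empty c)⟩
  simp

theorem IsSYT.mem_corners (hT : IsSYT S T) (hc : c ∈ S) (hTc : T c = #S) : c ∈ corners S := by
  refine mem_filter.2 ⟨hc, fun h => ?_, fun h => ?_⟩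
  · have := hT.2.2.1 c hc h; have := (hT.mem_Icc h).2; omega
  · have := hT.2.2.2 c hc h; have := (hT.mem_Icc h).2; omega

theorem IsSYT.erase_max (hT : IsSYT S T) (hc : c ∈ S) (hTc : T c = #S) :
    IsSYT (S.erase c) (update T c 0) := by
  have hcard : #(S.erase c) = #S - 1 := card_erase_of_mem hc
  have hIcc : Set.Icc 1 (#S - 1) = Set.Icc 1 #S \ {#S} := by
    ext k; simp only [Set.mem_Icc, Set.mem_sdiff, Set.mem_singleton_iff]; omega
  refine ⟨?_, fun d hd => ?_, fun d hd hd' => ?_, fun d hd hd' => ?_⟩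
  · have h := hT.1.sdiff_singleton (mem_coe.2 hc)
    rw [hTc, ← hIcc] at h
    rw [coe_erase, hcard]
    exact h.congr fun d hd => (update_of_ne hd.2 _ _).symm
  · by_cases hdc : d = c
    · rw [hdc, update_self]
    · rw [update_of_ne hdc, hT.2.1 d fun h => hd (mem_erase.2 ⟨hdc, h⟩)]
  · rw [update_of_ne (ne_of_mem_erase hd), update_of_ne (ne_of_mem_erase hd')]
    exact hT.2.2.1 d (mem_of_mem_erase hd) (mem_of_mem_erase hd')
  · rw [update_of_ne (ne_of_mem_erase hd), update_of_ne (ne_of_mem_erase hd')]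
    exact hT.2.2.2 d (mem_of_mem_erase hd) (mem_of_mem_erase hd')

theorem IsSYT.update_corner (hc : c ∈ corners S) (hT : IsSYT (S.erase c) T) :
    IsSYT S (update T c #S) := by
  obtain ⟨hcS, hright, hbelow⟩ := mem_filter.1 hc
  have hcard : #(S.erase c) = #S - 1 := card_erase_of_mem hcS
  have hlt : ∀ d ∈ S.erase c, T d < #S := fun d hd => by
    have := (hT.mem_Icc hd).2; have := card_pos.2 ⟨c, hcS⟩; omega
  have hIcc : Set.Icc 1 #S = insert #S (Set.Icc 1 (#S - 1)) := by
    ext k; simp only [Set.mem_Icc, Set.mem_insert_iff]; have := card_pos.2 ⟨c, hcS⟩; omega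
  refine ⟨?_, fun d hd => ?_, fun d hd hd' => ?_, fun d hd hd' => ?_⟩
  · have h := (hT.1.congr fun d hd => (update_of_ne (ne_of_mem_erase hd) #S T).symm).insert
      (a := c) (by rw [update_self, hcard]; simp)
    rwa [update_self, hcard, ← hIcc, ← coe_insert, insert_erase hcS] at h
  · rw [update_of_ne (by rintro rfl; exact hd hcS), hT.2.1 d fun h => hd (mem_of_mem_erase h)]
  · have hdc : d ≠ c := fun h => hright (h ▸ hd')
    by_cases hd'c : (d.1, d.2 + 1) = c
    · rw [hd'c, update_self, update_of_ne hdc]; exact hlt d (mem_erase.2 ⟨hdc, hd⟩)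
    · rw [update_of_ne hdc, update_of_ne hd'c]
      exact hT.2.2.1 d (mem_erase.2 ⟨hdc, hd⟩) (mem_erase.2 ⟨hd'c, hd'⟩)
  · have hdc : d ≠ c := fun h => hbelow (h ▸ hd')
    by_cases hd'c : (d.1 + 1, d.2) = c
    · rw [hd'c, update_self, update_of_ne hdc]; exact hlt d (mem_erase.2 ⟨hdc, hd⟩)
    · rw [update_of_ne hdc, update_of_ne hd'c]
      exact hT.2.2.2 d (mem_erase.2 ⟨hdc, hd⟩) (mem_erase.2 ⟨hd'c, hd'⟩)

/-- A standard tableau of `S` puts its largest entry in a corner, and removing it leaves a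
standard tableau of the rest. -/
theorem numSYT_eq_sum_corners (hS : S.Nonempty) :
    numSYT S = ∑ c ∈ corners S, numSYT (S.erase c) := by
  have hmax : #S ∈ Set.Icc 1 #S := ⟨card_pos.2 hS, le_rfl⟩
  let B : (Σ c : corners S, {T // IsSYT (S.erase c.1) T}) → {T // IsSYT S T} :=
    fun p => ⟨update p.2.1 p.1.1 #S, IsSYT.update_corner p.1.2 p.2.2⟩
  have hB : Bijective B := by
    refine ⟨fun ⟨⟨c, hc⟩, ⟨T, hT⟩⟩ ⟨⟨c', hc'⟩, ⟨T', hT'⟩⟩ h => ?_, fun ⟨T, hT⟩ => ?_⟩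
    · have h : update T c #S = update T' c' #S := congrArg Subtype.val h
      obtain rfl : c = c' := by
        by_contra hne
        have := congrFun h c
        rw [update_self, update_of_ne hne] at this
        have := (hT'.mem_Icc (mem_erase.2 ⟨hne, (mem_filter.1 hc).1⟩)).2
        rw [card_erase_of_mem (mem_filter.1 hc').1] at this
        have := card_pos.2 hS
        omega
      obtain rfl : T = T' := funext fun d => by
        by_cases hd : d = c
        · rw [hd, hT.2.1 c (notMem_erase c S), hT'.2.1 c (notMem_erase c S)]
        · simpa [update_of_ne hd] using congrFun h d
      rfl
    · obtain ⟨c, hc, hTc⟩ := hT.1.2.2 hmax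
      refine ⟨⟨⟨c, hT.mem_corners hc hTc⟩, ⟨update T c 0, hT.erase_max hc hTc⟩⟩, ?_⟩
      ext d
      by_cases hd : d = c
      · simp [B, hd, hTc]
      · simp [B, update_of_ne hd]
  rw [numSYT, ← Nat.card_eq_of_bijective B hB, Nat.card_sigma, ← sum_coe_sort (corners S)]
  rfl

end CornerRecursion

section PairProd

variable {α M : Type*} [CommMonoid M] {m : ℕ} {g : α → α → M} {x : ℕ → α}

def pairProd (m : ℕ) (g : α → α → M) (x : ℕ → α) : M :=
  ∏ a ∈ range m, ∏ b ∈ Ioo a m, g (x a) (x b)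

theorem pairProd_congr {x' : ℕ → α} (h : ∀ i < m, x i = x' i) :
    pairProd m g x = pairProd m g x' :=
  prod_congr rfl fun a ha => prod_congr rfl fun b hb => by
    rw [h a (mem_range.1 ha), h b (mem_Ioo.1 hb).2]

theorem pairProd_succ : pairProd (m + 1) g x = pairProd m g x * ∏ a ∈ range m, g (x a) (x m) := by
  have hIoo : ∀ a ∈ range m, Ioo a (m + 1) = insert m (Ioo a m) := fun a ha => by
    ext b; simp only [mem_Ioo, mem_insert]; have := mem_range.1 ha; omega
  have hempty : Ioo m (m + 1) = ∅ := by ext b; simp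
  rw [pairProd, prod_range_succ, hempty, prod_empty, mul_one, prod_congr rfl fun a ha => by
    rw [hIoo a ha, prod_insert (by simp)], prod_mul_distrib, pairProd, mul_comm]

/-- The pairs containing `i` contribute `ε ^ i * ∏ j ≠ i, g (x i) (x j)` to `pairProd m g x`. -/
theorem pairProd_update_mul {ε : M} (hsymm : ∀ a b, g b a = ε * g a b) {i : ℕ} (hi : i < m)
    (y : α) :
    pairProd m g (update x i y) * ∏ j ∈ (range m).erase i, g (x i) (x j) =
      pairProd m g x * ∏ j ∈ (range m).erase i, g y (x j) := by
  induction m with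
  | zero => simp at hi
  | succ m ih =>
    rcases Nat.lt_succ_iff_lt_or_eq.1 hi with hi | rfl
    · have hrange : (range (m + 1)).erase i = insert m ((range m).erase i) := by
        rw [range_add_one, erase_insert_of_ne hi.ne']
      have hlast : (∏ a ∈ range m, g (update x i y a) (x m)) * g (x i) (x m) =
          (∏ a ∈ range m, g (x a) (x m)) * g y (x m) := by
        rw [← mul_prod_erase _ _ (mem_range.2 hi), ← mul_prod_erase (range m) _ (mem_range.2 hi),
          update_self, prod_congr rfl fun a ha => by rw [update_of_ne (ne_of_mem_erase ha)]]
        ac_rfl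
      rw [hrange, prod_insert (by simp), prod_insert (by simp), pairProd_succ, pairProd_succ,
        update_of_ne hi.ne']
      calc _ = (pairProd m g (update x i y) * ∏ j ∈ (range m).erase i, g (x i) (x j)) *
              ((∏ a ∈ range m, g (update x i y a) (x m)) * g (x i) (x m)) := by ac_rfl
        _ = _ := by rw [ih hi, hlast]; ac_rfl
    · have hsym (z : α) : ∏ a ∈ range i, g (x a) z = ε ^ i * ∏ a ∈ range i, g z (x a) := by
        rw [prod_congr rfl fun a _ => hsymm z (x a), prod_mul_distrib, prod_const, card_range]
      rw [pairProd_succ, pairProd_succ, update_self, range_add_one, erase_insert (by simp),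
        pairProd_congr fun a ha => update_of_ne ha.ne y x,
        prod_congr rfl fun a ha => by rw [update_of_ne (mem_range.1 ha).ne], hsym, hsym]
      ac_rfl

end PairProd

section SchurIdentity

variable {F ι : Type*} [Field F] [DecidableEq ι] {s : Finset ι}

open Polynomial Lagrange in
theorem Lagrange.sum_eval_nodal_div {u : ι → F} (hu : Set.InjOn u s) (w : ι → F) :
    ∑ i ∈ s, (nodal s w).eval (u i) / ∏ j ∈ s.erase i, (u i - u j) =
      ∑ i ∈ s, u i - ∑ i ∈ s, w i := by
  rcases s.eq_empty_or_nonempty with rfl | hs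
  · simp
  have hdeg : (nodal s w - nodal s u).degree < #s := by
    rw [← degree_nodal (v := w)]
    exact degree_sub_lt_left (by rw [degree_nodal, degree_nodal]) nodal_ne_zero
      (by rw [nodal_monic.leadingCoeff, nodal_monic.leadingCoeff])
  have hcoeff (v : ι → F) : (nodal s v).coeff (#s - 1) = -∑ i ∈ s, v i := by
    rw [← prod_X_sub_C_nextCoeff, ← nodal_eq, nextCoeff_of_natDegree_pos (by
      rw [natDegree_nodal]; exact hs.card_pos), natDegree_nodal]
  have := coeff_eq_sum hu hdeg
  rw [coeff_sub, hcoeff, hcoeff] at this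
  rw [← neg_sub_neg, this]
  refine sum_congr rfl fun i hi => ?_
  rw [eval_sub, eval_nodal_at_node hi, sub_zero]

/-- With `u = x (x - 1)` and `w = x (x + 1)` the `j`-th factor is `(u i - w j) / (u i - u j)` and
`x i = -(u i - w i) / 2`, so this is `Lagrange.sum_eval_nodal_div`. -/
theorem sum_mul_prod_erase_div_eq_sum [NeZero (2 : F)] (x : ι → F)
    (hx : Set.InjOn (fun i => x i * (x i - 1)) s) :
    ∑ i ∈ s, x i * ∏ j ∈ s.erase i,
        (x i - 1 - x j) * (x i + x j) / ((x i - x j) * (x i - 1 + x j)) = ∑ i ∈ s, x i := by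
  set u : ι → F := fun i => x i * (x i - 1)
  set w : ι → F := fun i => x i * (x i + 1)
  have hterm : ∀ i ∈ s, x i * ∏ j ∈ s.erase i,
        (x i - 1 - x j) * (x i + x j) / ((x i - x j) * (x i - 1 + x j)) =
      -2⁻¹ * ((Lagrange.nodal s w).eval (u i) / ∏ j ∈ s.erase i, (u i - u j)) := by
    intro i hi
    have hfactor : ∀ j, (x i - 1 - x j) * (x i + x j) / ((x i - x j) * (x i - 1 + x j)) =
        (u i - w j) / (u i - u j) := fun j => by simp only [u, w]; congr 1 <;> ring
    rw [Lagrange.eval_nodal, ← mul_prod_erase s _ hi, mul_div_assoc, ← prod_div_distrib]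
    simp only [hfactor]
    rw [show u i - w i = -2 * x i by ring]
    field_simp
  rw [sum_congr rfl hterm, ← mul_sum, Lagrange.sum_eval_nodal_div hx, ← sum_sub_distrib, mul_sum]
  exact sum_congr rfl fun i _ => by simp only [u, w]; field_simp; ring

end SchurIdentity

section ShiftedDiagram

variable {m : ℕ} {f : ℕ → ℕ}

def shiftedDiagram (m : ℕ) (f : ℕ → ℕ) : Finset (ℕ × ℕ) :=
  (range m).biUnion fun i => (range (f i)).image fun j => (i, i + j)

theorem mem_shiftedDiagram {c : ℕ × ℕ} :
    c ∈ shiftedDiagram m f ↔ c.1 < m ∧ c.1 ≤ c.2 ∧ c.2 < c.1 + f c.1 := by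
  obtain ⟨a, b⟩ := c
  simp only [shiftedDiagram, mem_biUnion, mem_range, mem_image, Prod.mk.injEq]
  constructor
  · rintro ⟨i, hi, j, hj, rfl, rfl⟩
    omega
  · rintro ⟨h1, h2, h3⟩
    exact ⟨a, h1, b - a, by omega, rfl, by omega⟩

theorem shiftedDiagram_succ_update_zero :
    shiftedDiagram (m + 1) (update f m 0) = shiftedDiagram m f := by
  ext ⟨a, b⟩
  simp only [mem_shiftedDiagram, update_apply]
  split_ifs <;> omega

theorem shiftedDiagram_erase (i : ℕ) :
    (shiftedDiagram m f).erase (i, i + f i - 1) = shiftedDiagram m (update f i (f i - 1)) := by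
  ext ⟨a, b⟩
  simp only [mem_erase, mem_shiftedDiagram, update_apply, ne_eq, Prod.mk.injEq]
  split_ifs with h
  · subst h; omega
  · omega

def removableRows (m : ℕ) (f : ℕ → ℕ) : Finset ℕ :=
  (range m).filter fun i => i + 1 < m → f (i + 1) + 1 < f i

theorem StrictAntiOn.update_pred (hanti : StrictAntiOn f (Set.Iio m)) {i : ℕ}
    (hi : i ∈ removableRows m f) : StrictAntiOn (update f i (f i - 1)) (Set.Iio m) := by
  obtain ⟨hi, hrem⟩ := mem_filter.1 hi
  intro a ha b hb hab
  rcases eq_or_ne b i with rfl | hbi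
  · rw [update_self, update_of_ne hab.ne]
    have := hanti ha hb hab
    omega
  rcases eq_or_ne a i with rfl | hai
  · have ha' : a + 1 < m := lt_of_le_of_lt hab hb
    have := hrem ha'
    have := hanti.antitoneOn ha' hb hab
    rw [update_self, update_of_ne hbi]
    omega
  · rw [update_of_ne hai, update_of_ne hbi]
    exact hanti ha hb hab

variable (hanti : StrictAntiOn f (Set.Iio m)) (hpos : ∀ i < m, 0 < f i)
include hanti hpos

theorem corners_shiftedDiagram :
    corners (shiftedDiagram m f) = (removableRows m f).image fun i => (i, i + f i - 1) := by
  ext ⟨a, b⟩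
  simp only [corners, removableRows, mem_filter, mem_shiftedDiagram, mem_image, mem_range,
    Prod.mk.injEq]
  constructor
  · rintro ⟨⟨ha, hab, hb⟩, hright, hbelow⟩
    refine ⟨a, ⟨ha, fun ha' => ?_⟩, rfl, by omega⟩
    have := hanti ha ha' (Nat.lt_succ_self a)
    have := hpos _ ha'
    omega
  · rintro ⟨i, ⟨hi, hrem⟩, rfl, rfl⟩
    have := hpos i hi
    refine ⟨⟨hi, by omega, by omega⟩, by omega, fun ⟨ha', _, _⟩ => ?_⟩
    have := hrem ha'
    omega

theorem numSYT_shiftedDiagram_eq_sum (hm : 0 < m) :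
    numSYT (shiftedDiagram m f) =
      ∑ i ∈ removableRows m f, numSYT (shiftedDiagram m (update f i (f i - 1))) := by
  have hne : (shiftedDiagram m f).Nonempty :=
    ⟨(0, 0), mem_shiftedDiagram.2 ⟨hm, le_rfl, by simpa using hpos 0 hm⟩⟩
  rw [numSYT_eq_sum_corners hne, corners_shiftedDiagram hanti hpos,
    sum_image fun i _ j _ h => congrArg Prod.fst h]
  simp only [shiftedDiagram_erase]

end ShiftedDiagram

section SchurNumber

variable {m : ℕ} {f : ℕ → ℕ}

theorem sum_range_succ_update_zero :
    ∑ i ∈ range (m + 1), update f m 0 i = ∑ i ∈ range m, f i := by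
  rw [sum_range_succ, update_self, add_zero]
  exact sum_congr rfl fun i hi => update_of_ne (mem_range.1 hi).ne _ _

theorem sum_range_update_pred {i : ℕ} (hi : i < m) (hfi : 0 < f i) :
    ∑ j ∈ range m, update f i (f i - 1) j + 1 = ∑ j ∈ range m, f j := by
  rw [sum_update_of_mem (mem_range.2 hi), ← add_sum_erase _ _ (mem_range.2 hi),
    sdiff_singleton_eq_erase]
  omega

theorem prod_factorial_update_pred {i : ℕ} (hi : i < m) (hfi : 0 < f i) :
    ∏ j ∈ range m, (f j)! = f i * ∏ j ∈ range m, (update f i (f i - 1) j)! := by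
  have hrest :
      ∏ j ∈ (range m).erase i, (update f i (f i - 1) j)! = ∏ j ∈ (range m).erase i, (f j)! :=
    prod_congr rfl fun j hj => by rw [update_of_ne (ne_of_mem_erase hj)]
  rw [← mul_prod_erase _ _ (mem_range.2 hi),
    ← mul_prod_erase (range m) (fun j => (update f i (f i - 1) j)!) (mem_range.2 hi), update_self,
    hrest, ← mul_assoc, Nat.mul_factorial_pred hfi.ne']

noncomputable def schurNumber (m : ℕ) (f : ℕ → ℕ) : ℚ :=
  (∑ i ∈ range m, f i)! * pairProd m (· - ·) ((↑) ∘ f : ℕ → ℚ) /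
    ((∏ i ∈ range m, ((f i)! : ℚ)) * pairProd m (· + ·) ((↑) ∘ f : ℕ → ℚ))

theorem schurNumber_zero : schurNumber 0 f = 1 := by
  simp [schurNumber, pairProd]

theorem pairProd_add_ne_zero (hpos : ∀ i < m, 0 < f i) :
    pairProd m (· + ·) ((↑) ∘ f : ℕ → ℚ) ≠ 0 :=
  prod_ne_zero_iff.2 fun a ha => prod_ne_zero_iff.2 fun b _ => by
    have := hpos a (mem_range.1 ha)
    simp only [comp_apply]
    positivity

theorem schurNumber_succ_update_zero (hpos : ∀ i < m, 0 < f i) :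
    schurNumber (m + 1) (update f m 0) = schurNumber m f := by
  have hagree : ∀ i < m, update f m 0 i = f i := fun i hi => update_of_ne hi.ne _ _
  have hcast : ∀ i < m, ((↑) ∘ update f m 0 : ℕ → ℚ) i = ((↑) ∘ f : ℕ → ℚ) i := fun i hi => by
    simp [hagree i hi]
  have hprod : ∏ a ∈ range m, (f a : ℚ) ≠ 0 :=
    prod_ne_zero_iff.2 fun a ha => by have := hpos a (mem_range.1 ha); positivity
  have hfact : ∏ i ∈ range (m + 1), ((update f m 0 i)! : ℚ) = ∏ i ∈ range m, ((f i)! : ℚ) := by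
    rw [prod_range_succ, update_self, Nat.factorial_zero, Nat.cast_one, mul_one]
    exact prod_congr rfl fun i hi => by rw [hagree i (mem_range.1 hi)]
  have hpair (g : ℚ → ℚ → ℚ) (hg0 : ∀ a, g a 0 = a) :
      pairProd (m + 1) g ((↑) ∘ update f m 0) =
        pairProd m g ((↑) ∘ f) * ∏ a ∈ range m, (f a : ℚ) := by
    rw [pairProd_succ, pairProd_congr hcast]
    congr 1
    exact prod_congr rfl fun a ha => by simp [hagree a (mem_range.1 ha), hg0]
  rw [schurNumber, schurNumber, sum_range_succ_update_zero, hfact, hpair _ sub_zero,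
    hpair _ add_zero, ← mul_assoc, ← mul_assoc, mul_div_mul_right _ _ hprod]

theorem schurNumber_update_eq_zero (hanti : StrictAntiOn f (Set.Iio m)) {i : ℕ} (hi : i < m)
    (hrem : i ∉ removableRows m f) : schurNumber m (update f i (f i - 1)) = 0 := by
  obtain ⟨hi', hle⟩ : i + 1 < m ∧ f i ≤ f (i + 1) + 1 := by
    simpa [removableRows, hi] using hrem
  have hlt := hanti hi hi' (Nat.lt_succ_self i)
  have hzero : pairProd m (· - ·) ((↑) ∘ update f i (f i - 1) : ℕ → ℚ) = 0 :=
    prod_eq_zero (mem_range.2 hi) <| prod_eq_zero (mem_Ioo.2 ⟨Nat.lt_succ_self i, hi'⟩) <| by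
      simp only [comp_apply, update_self, update_of_ne (by omega : i + 1 ≠ i)]
      rw [sub_eq_zero]
      congr 1
      omega
  rw [schurNumber, hzero, mul_zero, zero_div]

theorem schurNumber_update (hanti : StrictAntiOn f (Set.Iio m)) (hpos : ∀ i < m, 0 < f i) {i : ℕ}
    (hi : i < m) :
    schurNumber m (update f i (f i - 1)) =
      schurNumber m f * ((f i : ℚ) / ∑ j ∈ range m, (f j : ℚ)) * ∏ j ∈ (range m).erase i,
        ((f i - 1 - f j) * (f i + f j) / ((f i - f j) * (f i - 1 + f j)) : ℚ) := by
  set x : ℕ → ℚ := (↑) ∘ f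
  have hfi := hpos i hi
  have hcast : ((↑) ∘ update f i (f i - 1) : ℕ → ℚ) = update x i (x i - 1) := by
    rw [comp_update, Nat.cast_pred hfi]
    rfl
  have hsum := (sum_range_update_pred hi hfi).symm
  have hfact : ∏ j ∈ range m, ((f j)! : ℚ) =
      (f i : ℚ) * ∏ j ∈ range m, ((update f i (f i - 1) j)! : ℚ) := by
    exact_mod_cast prod_factorial_update_pred hi hfi
  have hdiff :=
    pairProd_update_mul (g := (· - ·)) (ε := -1) (fun a b => by ring) hi (x := x) (x i - 1)
  have hadd :=
    pairProd_update_mul (g := (· + ·)) (ε := 1) (fun a b => by ring) hi (x := x) (x i - 1)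
  have hne_diff : ∏ j ∈ (range m).erase i, (x i - x j) ≠ 0 :=
    prod_ne_zero_iff.2 fun j hj => sub_ne_zero.2 <| by
      simp only [x, comp_apply]
      exact_mod_cast hanti.injOn.ne hi (mem_range.1 (mem_of_mem_erase hj)) (ne_of_mem_erase hj).symm
  have hne_add : ∏ j ∈ (range m).erase i, (x i - 1 + x j) ≠ 0 :=
    prod_ne_zero_iff.2 fun j hj => by
      have hfj := hpos j (mem_range.1 (mem_of_mem_erase hj))
      have : (1 : ℚ) ≤ x i := by simp only [x, comp_apply]; exact_mod_cast hfi
      have : (1 : ℚ) ≤ x j := by simp only [x, comp_apply]; exact_mod_cast hfj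
      linarith
  have hne_pairAdd := pairProd_add_ne_zero hpos
  have hne_fact : ∏ j ∈ range m, ((update f i (f i - 1) j)! : ℚ) ≠ 0 :=
    prod_ne_zero_iff.2 fun j _ => by positivity
  have hne_pairAdd' : pairProd m (· + ·) (update x i (x i - 1)) ≠ 0 :=
    left_ne_zero_of_mul (hadd ▸ mul_ne_zero hne_pairAdd hne_add)
  simp only [x, comp_apply] at *
  set N := ∑ j ∈ range m, update f i (f i - 1) j
  rw [schurNumber, schurNumber, hcast, hsum, hfact, ← Nat.cast_sum, hsum, Nat.factorial_succ,
    prod_div_distrib, prod_mul_distrib, prod_mul_distrib]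
  field_simp
  push_cast
  linear_combination
    ((N ! : ℚ) * (N + 1) * pairProd m (· + ·) ((↑) ∘ f : ℕ → ℚ) *
      ∏ j ∈ (range m).erase i, ((f i : ℚ) - 1 + f j)) * hdiff -
    ((N ! : ℚ) * (N + 1) * pairProd m (· - ·) ((↑) ∘ f : ℕ → ℚ) *
      ∏ j ∈ (range m).erase i, ((f i : ℚ) - 1 - f j)) * hadd

theorem sum_schurNumber_update (hanti : StrictAntiOn f (Set.Iio m)) (hpos : ∀ i < m, 0 < f i)
    (hm : 0 < m) : ∑ i ∈ range m, schurNumber m (update f i (f i - 1)) = schurNumber m f := by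
  have hge : ∀ i ∈ range m, (1 : ℚ) ≤ f i := fun i hi => by
    exact_mod_cast hpos i (mem_range.1 hi)
  have hinj : Set.InjOn (fun i => (f i : ℚ) * (f i - 1)) (range m) := fun a ha b hb hab => by
    have hfab : ((f a : ℚ) - f b) * (f a + f b - 1) = 0 := by linear_combination hab
    have := hge a ha
    have := hge b hb
    have hfab' : (f a : ℚ) = f b := by
      rcases mul_eq_zero.1 hfab with h | h
      · exact sub_eq_zero.1 h
      · linarith
    exact hanti.injOn (mem_range.1 ha) (mem_range.1 hb) (by exact_mod_cast hfab')
  have hn : ∑ i ∈ range m, (f i : ℚ) ≠ 0 := (sum_pos (fun i hi => by linarith [hge i hi])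
    (nonempty_range_iff.2 hm.ne')).ne'
  calc ∑ i ∈ range m, schurNumber m (update f i (f i - 1))
      = schurNumber m f / (∑ i ∈ range m, (f i : ℚ)) * ∑ i ∈ range m, (f i : ℚ) *
          ∏ j ∈ (range m).erase i,
            ((f i - 1 - f j) * (f i + f j) / ((f i - f j) * (f i - 1 + f j)) : ℚ) := by
        rw [mul_sum]
        exact sum_congr rfl fun i hi => by rw [schurNumber_update hanti hpos (mem_range.1 hi)]; ring
    _ = schurNumber m f := by rw [sum_mul_prod_erase_div_eq_sum _ hinj, div_mul_cancel₀ _ hn]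

theorem numSYT_shiftedDiagram (hanti : StrictAntiOn f (Set.Iio m))
    (hpos : ∀ i < m, 0 < f i) : (numSYT (shiftedDiagram m f) : ℚ) = schurNumber m f := by
  obtain ⟨n, hn⟩ : ∃ n, ∑ i ∈ range m, f i = n := ⟨_, rfl⟩
  induction n generalizing m f with
  | zero =>
    obtain rfl : m = 0 := by
      by_contra hm
      have := single_le_sum (fun i _ => Nat.zero_le (f i)) (mem_range.2 (Nat.pos_of_ne_zero hm))
      have := hpos 0 (Nat.pos_of_ne_zero hm)
      omega
    simp [shiftedDiagram, numSYT_empty, schurNumber_zero]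
  | succ n ih =>
    have hm : 0 < m := Nat.pos_of_ne_zero fun h => by simp [h] at hn
    rw [numSYT_shiftedDiagram_eq_sum hanti hpos hm, Nat.cast_sum,
      ← sum_schurNumber_update hanti hpos hm,
      ← sum_subset (filter_subset _ _) fun i hi hrem =>
        schurNumber_update_eq_zero hanti (mem_range.1 hi) hrem]
    refine sum_congr rfl fun i hi => ?_
    have him : i < m := mem_range.1 (mem_of_mem_filter i hi)
    have hsum : ∑ j ∈ range m, update f i (f i - 1) j = n := by
      have := sum_range_update_pred him (hpos i him)
      omega
    by_cases hlast : i + 1 = m ∧ f i = 1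
    · obtain ⟨rfl, hfi⟩ := hlast
      rw [hfi, Nat.sub_self] at hsum ⊢
      rw [sum_range_succ_update_zero] at hsum
      rw [shiftedDiagram_succ_update_zero,
        schurNumber_succ_update_zero fun j hj => hpos j (by omega)]
      exact ih (hanti.mono fun j hj => Nat.lt_succ_of_lt hj) (fun j hj => hpos j (by omega)) hsum
    · refine ih (hanti.update_pred hi) (fun j hj => ?_) hsum
      rcases eq_or_ne j i with rfl | hji
      · have hrem := (mem_filter.1 hi).2
        have := hpos j him
        rw [update_self]
        omega
      · rw [update_of_ne hji]; exact hpos j hj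

end SchurNumber

theorem List.sum_eq_sum_range_getD {M : Type*} [AddCommMonoid M] (L : List M) :
    L.sum = ∑ i ∈ Finset.range L.length, L.getD i 0 := by
  induction L with
  | nil => simp
  | cons a L ih => rw [sum_cons, length_cons, Finset.sum_range_succ', ih, add_comm]; rfl

/-- Schur's formula for shifted shapes (stated multiplicatively). -/
theorem schur_formula (m : ℕ) (L : List ℕ) (hlen : L.length = m)
    (hstrict : ∀ i j, i < j → j < m → L.getD j 0 < L.getD i 0)
    (hpos : ∀ i, i < m → 0 < L.getD i 0) :
    (numSYT (shiftedCells L) * ∏ i ∈ Finset.range m, (L.getD i 0).factorial) *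
        ∏ i ∈ Finset.range m, ∏ j ∈ Finset.Ioo i m, (L.getD i 0 + L.getD j 0)
      = L.sum.factorial *
          ∏ i ∈ Finset.range m, ∏ j ∈ Finset.Ioo i m,
            (L.getD i 0 - L.getD j 0) := by
  subst hlen
  have hcells : shiftedCells L = shiftedDiagram L.length (L.getD · 0) := rfl
  have hdiff : ∏ i ∈ range L.length, ∏ j ∈ Ioo i L.length, ((L.getD i 0 - L.getD j 0 : ℕ) : ℚ) =
      pairProd L.length (· - ·) ((↑) ∘ (L.getD · 0) : ℕ → ℚ) :=
    prod_congr rfl fun i _ => prod_congr rfl fun j hj =>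
      Nat.cast_sub (hstrict i j (mem_Ioo.1 hj).1 (mem_Ioo.1 hj).2).le
  have key := numSYT_shiftedDiagram (fun i _ j hj hij => hstrict i j hij hj) hpos
  rw [schurNumber, ← hdiff, eq_div_iff (mul_ne_zero (prod_ne_zero_iff.2 fun i _ => by positivity)
    (pairProd_add_ne_zero hpos))] at key
  rw [← Nat.cast_inj (R := ℚ), L.sum_eq_sum_range_getD]
  push_cast
  rw [hcells, mul_assoc]
  exact key
end

section
/- Let m and t be nonnegative integers with t ≤ binomial(m+1,2), let T be a standard Young tableau of shifted staircase shape [m], let T1 be the subtableau of cells with entries at most t, and let T2 be obtained from the remaining cells by transposing the shape and replacing each entry i by M - i + 1 where M = binomial(m+1,2). Then T1 and T2 are standard Young tableaux of shifted shapes λ¹ and λ², respectively, and the set of parts {m, m-1, ..., 1} is the disjoint union of the sets of parts of λ¹ and of λ². -/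
open Finset

/-!
The staircase `[m]` is the cell set `{(i, j) | i ≤ j < m}`. In a standard filling the cells with
entries `≤ t` form an order ideal, hence a shifted diagram. Reflecting the staircase in its
anti-diagonal and replacing each entry `i` by `M + 1 - i` gives again a standard filling, whose
cells with entries `≤ M - t` are exactly the second piece; so it is a shifted diagram too.

A shifted diagram of shape `λ` has `#{i | λ_i > d}` cells on the diagonal `j - i = d`, and these
counts drop from `d = v - 1` to `d = v` exactly by the number of parts equal to `v`. The
reflection preserves diagonals, so the counts of the two pieces add up to the `m - d` cells of
the staircase on diagonal `d`. The total therefore drops by one at each `v ∈ {1, …, m}`, i.e.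
each such `v` is a part of exactly one of the two shapes.
-/

theorem mem_shiftedCells {L : List ℕ} {i j : ℕ} :
    (i, j) ∈ shiftedCells L ↔ i < L.length ∧ i ≤ j ∧ j < i + L.getD i 0 := by
  simp only [shiftedCells, mem_biUnion, mem_range, mem_image, Prod.mk.injEq]
  constructor
  · rintro ⟨i, hi, d, hd, rfl, rfl⟩
    omega
  · rintro ⟨hi, hij, hj⟩
    exact ⟨i, hi, j - i, by omega, rfl, by omega⟩

theorem stair_getD (m i : ℕ) : (stair m).getD i 0 = m - i := by
  rcases lt_or_ge i m with hi | hi <;> simp [stair, hi]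

theorem mem_staircase {m : ℕ} {c : ℕ × ℕ} :
    c ∈ shiftedCells (stair m) ↔ c.1 ≤ c.2 ∧ c.2 < m := by
  obtain ⟨i, j⟩ := c
  rw [mem_shiftedCells, stair_getD, stair, List.length_map, List.length_range]
  omega

theorem card_staircase (m : ℕ) : #(shiftedCells (stair m)) = (m + 1).choose 2 := by
  rw [← card_range (m + 1), ← card_product_filter_lt]
  refine card_nbij' (fun c => (c.1, c.2 + 1)) (fun c => (c.1, c.2 - 1)) ?_ ?_ ?_ ?_ <;>
    rintro ⟨i, j⟩ hc <;>
    simp only [mem_coe, mem_filter, mem_product, mem_range, mem_staircase, Prod.mk.injEq,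
      true_and] at hc ⊢ <;>
    omega

theorem card_eq_of_bijOn_Icc {α : Type*} {s : Finset α} {f : α → ℕ} {k : ℕ}
    (h : Set.BijOn f ↑s (Set.Icc 1 k)) : #s = k := by
  rw [← Set.ncard_coe_finset, h.ncard_eq, ← coe_Icc, Set.ncard_coe_finset, Nat.card_Icc,
    Nat.add_sub_cancel]

theorem IsSYT.filter_le {S : Finset (ℕ × ℕ)} {T : ℕ × ℕ → ℕ} (hT : IsSYT S T) (t : ℕ) :
    IsSYT (S.filter (T · ≤ t)) fun c => if c ∈ S.filter (T · ≤ t) then T c else 0 := by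
  obtain ⟨hbij, -, hrow, hcol⟩ := hT
  have hfilter : ↑(S.filter (T · ≤ t)) = ↑S ∩ T ⁻¹' Set.Icc 1 (min #S t) := by
    ext c
    simp only [mem_coe, mem_filter, Set.mem_inter_iff, Set.mem_preimage,
      Set.mem_Icc, le_min_iff]
    constructor
    · rintro ⟨hc, hct⟩
      exact ⟨hc, (hbij.mapsTo hc).1, (hbij.mapsTo hc).2, hct⟩
    · rintro ⟨hc, -, -, hct⟩
      exact ⟨hc, hct⟩
  have hbij' : Set.BijOn T ↑(S.filter (T · ≤ t)) (Set.Icc 1 (min #S t)) :=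
    hfilter ▸ hbij.subset_right (Set.Icc_subset_Icc_right (min_le_left _ _))
  refine ⟨?_, fun c hc => if_neg hc, fun c hc hc' => ?_, fun c hc hc' => ?_⟩
  · rw [card_eq_of_bijOn_Icc hbij']
    exact hbij'.congr fun c hc => (if_pos hc).symm
  · simp only [if_pos hc, if_pos hc']
    exact hrow c (mem_filter.1 hc).1 (mem_filter.1 hc').1
  · simp only [if_pos hc, if_pos hc']
    exact hcol c (mem_filter.1 hc).1 (mem_filter.1 hc').1

structure IsShiftedDiagram (S : Finset (ℕ × ℕ)) : Prop where
  le_of_mem : ∀ c ∈ S, c.1 ≤ c.2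
  mem_of_right : ∀ {i j}, i ≤ j → (i, j + 1) ∈ S → (i, j) ∈ S
  mem_of_below : ∀ {i j}, (i + 1, j) ∈ S → (i, j) ∈ S

theorem isShiftedDiagram_staircase (m : ℕ) : IsShiftedDiagram (shiftedCells (stair m)) where
  le_of_mem _ hc := (mem_staircase.1 hc).1
  mem_of_right hij hc := mem_staircase.2 ⟨hij, by have := mem_staircase.1 hc; omega⟩
  mem_of_below hc := mem_staircase.2 (by have := mem_staircase.1 hc; omega)

theorem IsSYT.isShiftedDiagram_filter_le {S : Finset (ℕ × ℕ)} {T : ℕ × ℕ → ℕ}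
    (hS : IsShiftedDiagram S) (hT : IsSYT S T) (t : ℕ) :
    IsShiftedDiagram (S.filter (T · ≤ t)) where
  le_of_mem c hc := hS.le_of_mem c (mem_filter.1 hc).1
  mem_of_right {i j} hij hc := by
    obtain ⟨hc, hct⟩ := mem_filter.1 hc
    have hc' := hS.mem_of_right hij hc
    exact mem_filter.2 ⟨hc', (hT.2.2.1 (i, j) hc' hc).le.trans hct⟩
  mem_of_below {i j} hc := by
    obtain ⟨hc, hct⟩ := mem_filter.1 hc
    have hc' := hS.mem_of_below hc
    exact mem_filter.2 ⟨hc', (hT.2.2.2 (i, j) hc' hc).le.trans hct⟩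

/-- In a shifted diagram row `i` is the interval `[i, i + rowLen S i)`, so its length is the
first gap after the diagonal. -/
def rowLen (S : Finset (ℕ × ℕ)) (i : ℕ) : ℕ :=
  Nat.find (p := fun d => (i, i + d) ∉ S)
    ⟨S.sup Prod.snd + 1, fun h => by have := le_sup (f := Prod.snd) h; dsimp only at this; omega⟩

def numRows (S : Finset (ℕ × ℕ)) : ℕ :=
  Nat.find (p := fun i => (i, i) ∉ S)
    ⟨S.sup Prod.snd + 1, fun h => by have := le_sup (f := Prod.snd) h; dsimp only at this; omega⟩

def rowLengths (S : Finset (ℕ × ℕ)) : List ℕ := (List.range (numRows S)).map (rowLen S)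

def numRowsOfLen (S : Finset (ℕ × ℕ)) (v : ℕ) : ℕ :=
  #((range (numRows S)).filter (rowLen S · = v))

def diagCount (S : Finset (ℕ × ℕ)) (d : ℕ) : ℕ := #(S.filter fun c => c.2 = c.1 + d)

theorem mem_toFinset_rowLengths {S : Finset (ℕ × ℕ)} {v : ℕ} :
    v ∈ (rowLengths S).toFinset ↔ 0 < numRowsOfLen S v := by
  simp [rowLengths, numRowsOfLen, card_pos, filter_nonempty_iff]

theorem diagCount_filter_add_diagCount_filter_not (S : Finset (ℕ × ℕ)) (p : ℕ × ℕ → Prop)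
    [DecidablePred p] (d : ℕ) :
    diagCount (S.filter p) d + diagCount (S.filter (¬p ·)) d = diagCount S d := by
  simp only [diagCount, filter_filter]
  rw [← card_filter_add_card_filter_not (s := S.filter fun c => c.2 = c.1 + d) p]
  simp only [filter_filter, and_comm]

namespace IsShiftedDiagram

variable {S : Finset (ℕ × ℕ)}

theorem mem_of_le (hS : IsShiftedDiagram S) {i j i' j' : ℕ} (hc : (i', j') ∈ S)
    (hi : i ≤ i') (hij : i ≤ j) (hj : j ≤ j') : (i, j) ∈ S := by
  have hcol : (i, j') ∈ S := by
    induction i', hi using Nat.le_induction with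
    | base => exact hc
    | succ i' _ ih => exact ih (hS.mem_of_below hc)
  clear hc
  induction j', hj using Nat.le_induction with
  | base => exact hcol
  | succ j' hj ih => exact ih (hS.mem_of_right (hij.trans hj) hcol)

theorem mem_iff_lt_rowLen (hS : IsShiftedDiagram S) {i d : ℕ} :
    (i, i + d) ∈ S ↔ d < rowLen S i := by
  rw [rowLen, Nat.lt_find_iff]
  simp only [not_not]
  exact ⟨fun h e he => hS.mem_of_le h le_rfl (by omega) (by omega), fun h => h d le_rfl⟩

theorem mem_iff (hS : IsShiftedDiagram S) {i j : ℕ} :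
    (i, j) ∈ S ↔ i ≤ j ∧ j < i + rowLen S i := by
  constructor
  · intro h
    have hij : i ≤ j := hS.le_of_mem _ h
    obtain ⟨d, rfl⟩ := Nat.exists_eq_add_of_le hij
    exact ⟨by omega, by have := hS.mem_iff_lt_rowLen.1 h; omega⟩
  · rintro ⟨hij, hj⟩
    obtain ⟨d, rfl⟩ := Nat.exists_eq_add_of_le hij
    exact hS.mem_iff_lt_rowLen.2 (by omega)

theorem rowLen_pos_iff (hS : IsShiftedDiagram S) {i : ℕ} : 0 < rowLen S i ↔ (i, i) ∈ S := by
  simpa using hS.mem_iff_lt_rowLen (i := i) (d := 0) |>.symm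

theorem lt_numRows_iff (hS : IsShiftedDiagram S) {i : ℕ} : i < numRows S ↔ (i, i) ∈ S := by
  rw [numRows, Nat.lt_find_iff]
  simp only [not_not]
  exact ⟨fun h => h i le_rfl, fun h k hk => hS.mem_of_le h hk le_rfl hk⟩

theorem rowLen_lt_rowLen (hS : IsShiftedDiagram S) {i j : ℕ} (hij : i < j) (hj : (j, j) ∈ S) :
    rowLen S j < rowLen S i := by
  have hlast : (j, j + (rowLen S j - 1)) ∈ S :=
    hS.mem_iff_lt_rowLen.2 (by have := hS.rowLen_pos_iff.2 hj; omega)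
  have := (hS.mem_iff).1 (hS.mem_of_le hlast hij.le (by omega) le_rfl)
  omega

theorem getD_rowLengths (hS : IsShiftedDiagram S) (i : ℕ) :
    (rowLengths S).getD i 0 = rowLen S i := by
  rcases lt_or_ge i (numRows S) with hi | hi
  · simp [rowLengths, hi]
  · rw [List.getD_eq_default _ _ (by simpa [rowLengths] using hi)]
    have : ¬ 0 < rowLen S i := by rw [hS.rowLen_pos_iff, ← hS.lt_numRows_iff]; omega
    omega

theorem shiftedCells_rowLengths (hS : IsShiftedDiagram S) : shiftedCells (rowLengths S) = S := by
  ext ⟨i, j⟩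
  rw [mem_shiftedCells, hS.getD_rowLengths, hS.mem_iff, rowLengths, List.length_map,
    List.length_range, hS.lt_numRows_iff, ← hS.rowLen_pos_iff]
  omega

theorem getD_rowLengths_lt (hS : IsShiftedDiagram S) {i j : ℕ} (hij : i < j)
    (hj : j < (rowLengths S).length) :
    (rowLengths S).getD j 0 < (rowLengths S).getD i 0 := by
  rw [rowLengths, List.length_map, List.length_range, hS.lt_numRows_iff] at hj
  rw [hS.getD_rowLengths, hS.getD_rowLengths]
  exact hS.rowLen_lt_rowLen hij hj

theorem getD_rowLengths_pos (hS : IsShiftedDiagram S) {i : ℕ} (hi : i < (rowLengths S).length) :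
    0 < (rowLengths S).getD i 0 := by
  rw [rowLengths, List.length_map, List.length_range, hS.lt_numRows_iff] at hi
  rw [hS.getD_rowLengths]
  exact hS.rowLen_pos_iff.2 hi

theorem numRowsOfLen_zero (hS : IsShiftedDiagram S) : numRowsOfLen S 0 = 0 := by
  rw [numRowsOfLen, card_eq_zero, filter_eq_empty_iff]
  intro i hi
  have := hS.rowLen_pos_iff.2 (hS.lt_numRows_iff.1 (mem_range.1 hi))
  omega

theorem diagCount_eq (hS : IsShiftedDiagram S) (d : ℕ) :
    diagCount S d = #((range (numRows S)).filter (d < rowLen S ·)) := by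
  refine card_nbij' Prod.fst (fun i => (i, i + d)) ?_ ?_ ?_ ?_
  · rintro ⟨i, j⟩ hc
    simp only [mem_coe, mem_filter, mem_range] at hc ⊢
    obtain ⟨hc, rfl⟩ := hc
    exact ⟨hS.lt_numRows_iff.2 (hS.mem_of_le hc le_rfl le_rfl (by omega)),
      hS.mem_iff_lt_rowLen.1 hc⟩
  · intro i hi
    simp only [mem_coe, mem_filter, mem_range, and_true] at hi ⊢
    exact hS.mem_iff_lt_rowLen.2 hi.2
  · rintro ⟨i, j⟩ hc
    simp only [mem_coe, mem_filter] at hc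
    simp [hc.2]
  · intro i _
    rfl

theorem diagCount_eq_diagCount_succ_add (hS : IsShiftedDiagram S) (v : ℕ) :
    diagCount S v = diagCount S (v + 1) + numRowsOfLen S (v + 1) := by
  rw [hS.diagCount_eq, hS.diagCount_eq, numRowsOfLen, ← card_union_of_disjoint
    (disjoint_filter.2 fun i _ h h' => by omega), ← filter_or]
  congr 1
  exact filter_congr fun i _ => by omega

theorem disjoint_rowLengths_toFinset_and_union_eq_Icc {S₁ S₂ : Finset (ℕ × ℕ)} {m : ℕ}
    (hS₁ : IsShiftedDiagram S₁) (hS₂ : IsShiftedDiagram S₂)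
    (hdiag : ∀ d, diagCount S₁ d + diagCount S₂ d = m - d) :
    Disjoint (rowLengths S₁).toFinset (rowLengths S₂).toFinset ∧
      (rowLengths S₁).toFinset ∪ (rowLengths S₂).toFinset = Icc 1 m := by
  have hcount : ∀ v, numRowsOfLen S₁ v + numRowsOfLen S₂ v = if v ∈ Icc 1 m then 1 else 0 := by
    rintro (_ | v)
    · simp [hS₁.numRowsOfLen_zero, hS₂.numRowsOfLen_zero]
    · have := hdiag v
      have := hdiag (v + 1)
      have := hS₁.diagCount_eq_diagCount_succ_add v
      have := hS₂.diagCount_eq_diagCount_succ_add v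
      split_ifs with hv <;> rw [mem_Icc] at hv <;> omega
  constructor
  · refine disjoint_left.2 fun v h₁ h₂ => ?_
    rw [mem_toFinset_rowLengths] at h₁ h₂
    have := hcount v
    split_ifs at this <;> omega
  · ext v
    rw [mem_union, mem_toFinset_rowLengths, mem_toFinset_rowLengths]
    have := hcount v
    split_ifs at this with hv <;> simp only [hv, iff_true, iff_false] <;> omega

end IsShiftedDiagram

def antiTranspose (m : ℕ) (c : ℕ × ℕ) : ℕ × ℕ := (m - 1 - c.2, m - 1 - c.1)

section antiTranspose

variable {m : ℕ} {c : ℕ × ℕ}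

theorem antiTranspose_mem_staircase (hc : c ∈ shiftedCells (stair m)) :
    antiTranspose m c ∈ shiftedCells (stair m) := by
  rw [mem_staircase] at hc ⊢
  simp only [antiTranspose]
  omega

theorem antiTranspose_antiTranspose (hc : c ∈ shiftedCells (stair m)) :
    antiTranspose m (antiTranspose m c) = c := by
  rw [mem_staircase] at hc
  ext <;> simp only [antiTranspose] <;> omega

theorem bijOn_antiTranspose :
    Set.BijOn (antiTranspose m) ↑(shiftedCells (stair m)) ↑(shiftedCells (stair m)) :=
  Set.InvOn.bijOn ⟨fun _ hc => antiTranspose_antiTranspose hc,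
    fun _ hc => antiTranspose_antiTranspose hc⟩
    (fun _ hc => antiTranspose_mem_staircase hc) (fun _ hc => antiTranspose_mem_staircase hc)

theorem mem_image_antiTranspose {s : Finset (ℕ × ℕ)} (hs : s ⊆ shiftedCells (stair m)) :
    c ∈ s.image (antiTranspose m) ↔
      c ∈ shiftedCells (stair m) ∧ antiTranspose m c ∈ s := by
  constructor
  · intro hc
    obtain ⟨d, hd, rfl⟩ := mem_image.1 hc
    exact ⟨antiTranspose_mem_staircase (hs hd), by rwa [antiTranspose_antiTranspose (hs hd)]⟩
  · rintro ⟨hc, hsc⟩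
    exact mem_image.2 ⟨_, hsc, antiTranspose_antiTranspose hc⟩

end antiTranspose

theorem bijOn_sub_Icc (n : ℕ) :
    Set.BijOn (fun k => n + 1 - k) (Set.Icc 1 n) (Set.Icc 1 n) :=
  have h : Set.MapsTo (fun k => n + 1 - k) (Set.Icc 1 n) (Set.Icc 1 n) :=
    fun k ⟨_, _⟩ => ⟨by beta_reduce; omega, by beta_reduce; omega⟩
  have h' : Set.LeftInvOn (fun k => n + 1 - k) (fun k => n + 1 - k) (Set.Icc 1 n) :=
    fun k ⟨_, _⟩ => by beta_reduce; omega
  Set.InvOn.bijOn ⟨h', h'⟩ h h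

def staircaseDual (m : ℕ) (T : ℕ × ℕ → ℕ) (c : ℕ × ℕ) : ℕ :=
  if c ∈ shiftedCells (stair m) then (m + 1).choose 2 + 1 - T (antiTranspose m c) else 0

theorem IsSYT.staircaseDual {m : ℕ} {T : ℕ × ℕ → ℕ} (hT : IsSYT (shiftedCells (stair m)) T) :
    IsSYT (shiftedCells (stair m)) (staircaseDual m T) := by
  obtain ⟨hbij, hzero, hrow, hcol⟩ := hT
  rw [card_staircase] at hbij
  have hbound : ∀ c ∈ shiftedCells (stair m), 1 ≤ T c ∧ T c ≤ (m + 1).choose 2 :=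
    fun c hc => hbij.mapsTo hc
  refine ⟨?_, fun c hc => if_neg hc, ?_, ?_⟩
  · rw [card_staircase]
    refine (((bijOn_sub_Icc _).comp hbij).comp bijOn_antiTranspose).congr fun c hc => ?_
    simp only [Function.comp, _root_.staircaseDual, if_pos (mem_coe.1 hc)]
  · rintro ⟨i, j⟩ hc hc'
    have hd := antiTranspose_mem_staircase hc
    have hd' := antiTranspose_mem_staircase hc'
    have := hcol _ hd' (by rw [mem_staircase] at hc' hd ⊢; simp only [antiTranspose] at *; omega)
    simp only [_root_.staircaseDual, if_pos hc, if_pos hc']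
    have := hbound _ hd
    have := hbound _ hd'
    rw [mem_staircase] at hc'
    simp only [antiTranspose] at *
    rw [show m - 1 - (j + 1) + 1 = m - 1 - j by omega] at *
    omega
  · rintro ⟨i, j⟩ hc hc'
    have hd := antiTranspose_mem_staircase hc
    have hd' := antiTranspose_mem_staircase hc'
    have := hrow _ hd' (by rw [mem_staircase] at hc' hd ⊢; simp only [antiTranspose] at *; omega)
    simp only [_root_.staircaseDual, if_pos hc, if_pos hc']
    have := hbound _ hd
    have := hbound _ hd'
    rw [mem_staircase] at hc'
    simp only [antiTranspose] at *
    rw [show m - 1 - (i + 1) + 1 = m - 1 - i by omega] at *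
    omega

theorem diagCount_staircase (m d : ℕ) : diagCount (shiftedCells (stair m)) d = m - d := by
  rw [← card_range (m - d)]
  refine card_nbij' Prod.fst (fun i => (i, i + d)) ?_ ?_ ?_ ?_
  · rintro ⟨i, j⟩ hc
    simp only [mem_coe, mem_filter, mem_staircase, mem_range] at hc ⊢
    omega
  · intro i hi
    simp only [mem_coe, mem_filter, mem_staircase, mem_range, and_true] at hi ⊢
    omega
  · rintro ⟨i, j⟩ hc
    simp only [mem_coe, mem_filter] at hc
    simp [hc.2]
  · intro i _
    rfl

theorem diagCount_image_antiTranspose {m : ℕ} {s : Finset (ℕ × ℕ)}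
    (hs : s ⊆ shiftedCells (stair m)) (d : ℕ) :
    diagCount (s.image (antiTranspose m)) d = diagCount s d := by
  rw [diagCount, filter_image, card_image_of_injOn (bijOn_antiTranspose.injOn.mono
    ((coe_subset.2 (filter_subset _ _)).trans (coe_subset.2 hs)))]
  refine congrArg card (filter_congr fun c hc => ?_)
  have := mem_staircase.1 (hs hc)
  simp only [antiTranspose]
  omega

theorem image_antiTranspose_filter_lt {m : ℕ} {T : ℕ × ℕ → ℕ}
    (hT : IsSYT (shiftedCells (stair m)) T) (t : ℕ) :
    ((shiftedCells (stair m)).filter (t < T ·)).image (antiTranspose m) =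
      (shiftedCells (stair m)).filter (staircaseDual m T · ≤ (m + 1).choose 2 - t) := by
  ext c
  rw [mem_image_antiTranspose (filter_subset _ _), mem_filter, mem_filter]
  refine and_congr_right fun hc => ?_
  have hbound := hT.1.mapsTo (antiTranspose_mem_staircase hc)
  rw [card_staircase, Set.mem_Icc] at hbound
  rw [and_iff_right (antiTranspose_mem_staircase hc), staircaseDual, if_pos hc]
  omega

theorem staircase_split_general (m t : ℕ)
    (T : ℕ × ℕ → ℕ) (hT : IsSYT (shiftedCells (stair m)) T)
    (S1 S2 : Finset (ℕ × ℕ)) (T1 T2 : ℕ × ℕ → ℕ)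
    (hS1 : S1 = (shiftedCells (stair m)).filter fun c => T c ≤ t)
    (hS2 : S2 = ((shiftedCells (stair m)).filter fun c => t < T c).image
        fun c => (m - 1 - c.2, m - 1 - c.1))
    (hT1 : T1 = fun c => if c ∈ S1 then T c else 0)
    (hT2 : T2 = fun c =>
        if c ∈ S2 then (m + 1).choose 2 + 1 - T (m - 1 - c.2, m - 1 - c.1) else 0) :
    ∃ L1 L2 : List ℕ,
      (∀ i j, i < j → j < L1.length → L1.getD j 0 < L1.getD i 0) ∧
      (∀ i, i < L1.length → 0 < L1.getD i 0) ∧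
      (∀ i j, i < j → j < L2.length → L2.getD j 0 < L2.getD i 0) ∧
      (∀ i, i < L2.length → 0 < L2.getD i 0) ∧
      S1 = shiftedCells L1 ∧ S2 = shiftedCells L2 ∧
      IsSYT S1 T1 ∧ IsSYT S2 T2 ∧
      Disjoint L1.toFinset L2.toFinset ∧
      L1.toFinset ∪ L2.toFinset = Finset.Icc 1 m := by
  replace hS2 : S2 = ((shiftedCells (stair m)).filter (t < T ·)).image (antiTranspose m) := hS2
  have hS2' := hS2.trans (image_antiTranspose_filter_lt hT t)
  have hT2' : T2 = fun c => if c ∈ S2 then staircaseDual m T c else 0 := by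
    refine hT2.trans (funext fun c => ?_)
    split_ifs with hc
    · rw [staircaseDual, if_pos (mem_filter.1 (hS2' ▸ hc)).1]
      rfl
    · rfl
  have hD₁ : IsShiftedDiagram S1 :=
    hS1 ▸ hT.isShiftedDiagram_filter_le (isShiftedDiagram_staircase m) t
  have hD₂ : IsShiftedDiagram S2 :=
    hS2' ▸ hT.staircaseDual.isShiftedDiagram_filter_le (isShiftedDiagram_staircase m) _
  have hdiag : ∀ d, diagCount S1 d + diagCount S2 d = m - d := fun d => by
    rw [hS1, hS2, diagCount_image_antiTranspose (filter_subset _ _), ← diagCount_staircase m d,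
      ← diagCount_filter_add_diagCount_filter_not (shiftedCells (stair m)) (T · ≤ t)]
    simp only [not_le]
  refine ⟨rowLengths S1, rowLengths S2, fun _ _ => hD₁.getD_rowLengths_lt,
    fun _ => hD₁.getD_rowLengths_pos, fun _ _ => hD₂.getD_rowLengths_lt,
    fun _ => hD₂.getD_rowLengths_pos, hD₁.shiftedCells_rowLengths.symm,
    hD₂.shiftedCells_rowLengths.symm, ?_, ?_,
    hD₁.disjoint_rowLengths_toFinset_and_union_eq_Icc hD₂ hdiag⟩
  · rw [hT1, hS1]
    exact hT.filter_le t
  · rw [hT2', hS2']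
    exact hT.staircaseDual.filter_le _

/-- splitting a staircase SYT at value `t` produces two shifted SYT
whose shapes have complementary sets of parts in `{1,…,m}`. -/
theorem staircase_split (m t : ℕ) (ht : t ≤ (m + 1).choose 2)
    (T : ℕ × ℕ → ℕ) (hT : IsSYT (shiftedCells (stair m)) T)
    (S1 S2 : Finset (ℕ × ℕ)) (T1 T2 : ℕ × ℕ → ℕ)
    (hS1 : S1 = (shiftedCells (stair m)).filter fun c => T c ≤ t)
    (hS2 : S2 = ((shiftedCells (stair m)).filter fun c => t < T c).image
        fun c => (m - 1 - c.2, m - 1 - c.1))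
    (hT1 : T1 = fun c => if c ∈ S1 then T c else 0)
    (hT2 : T2 = fun c =>
        if c ∈ S2 then (m + 1).choose 2 + 1 - T (m - 1 - c.2, m - 1 - c.1) else 0) :
    ∃ L1 L2 : List ℕ,
      (∀ i j, i < j → j < L1.length → L1.getD j 0 < L1.getD i 0) ∧
      (∀ i, i < L1.length → 0 < L1.getD i 0) ∧
      (∀ i j, i < j → j < L2.length → L2.getD j 0 < L2.getD i 0) ∧
      (∀ i, i < L2.length → 0 < L2.getD i 0) ∧
      S1 = shiftedCells L1 ∧ S2 = shiftedCells L2 ∧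
      IsSYT S1 T1 ∧ IsSYT S2 T2 ∧
      Disjoint L1.toFinset L2.toFinset ∧
      L1.toFinset ∪ L2.toFinset = Finset.Icc 1 m :=
  staircase_split_general m t T hT S1 S2 T1 T2 hS1 hS2 hT1 hT2
end

section
/- For any nonnegative integers m, n, t with t ≤ mn, the sum over partitions λ contained in the m×n rectangle with |λ| = t of f^λ * f^{λᶜ} equals f^{(n^m)}, where λᶜ is the partition such that λᶜ + (n, n-1, ..., 1) is the set complement of λ + (m, m-1, ..., 1) inside {1, ..., m+n}. In particular, the sum is independent of t. -/
open Finset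

/-! In a standard tableau `T` of the `m × n` rectangle the entries `≤ t` fill a Young diagram
`λ ⊆ (n^m)` with `|λ| = t`, encoded by the `m`-subset `s = {λᵢ + m - i}` of `{1, …, m + n}`, and
form a standard tableau of `λ`. The other entries, replaced by `mn + 1 - T c` and moved by
`(i, j) ↦ (n-1-j, m-1-i)` (a half-turn of the box followed by transposition), form a standard
tableau of the partition `λᶜ` encoded by the complement of `s`: a cell of the box lies outside `λ`
exactly when its image lies in `λᶜ`, as both conditions count the elements of `s` above the same
threshold. Conversely every such pair glues back to a rectangular tableau, so summing over `λ`
counts each tableau of the rectangle once. -/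

lemma mem_shapeCells {L : List ℕ} {c : ℕ × ℕ} :
    c ∈ shapeCells L ↔ c.1 < L.length ∧ c.2 < L.getD c.1 0 := by
  simp only [shapeCells, mem_biUnion, mem_range, mem_image]
  constructor
  · rintro ⟨i, hi, j, hj, rfl⟩
    exact ⟨hi, hj⟩
  · intro h
    exact ⟨c.1, h.1, c.2, h.2, rfl⟩

lemma card_shapeCells (L : List ℕ) : #(shapeCells L) = L.sum := by
  rw [shapeCells, card_biUnion]
  · have hrow (i : ℕ) : #((range (L.getD i 0)).image fun j => (i, j)) = L.getD i 0 := by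
      rw [card_image_of_injective _ (Prod.mk_right_injective i), card_range]
    rw [sum_congr rfl fun i _ => hrow i]
    clear hrow
    induction L with
    | nil => rfl
    | cons a l ih => rw [List.sum_cons, ← ih]; simp [sum_range_succ', add_comm]
  · intro i _ i' _ hii'
    simp only [disjoint_left, mem_image]
    rintro _ ⟨j, _, rfl⟩ ⟨j', _, h⟩
    exact hii' (Prod.mk.inj h).1.symm

lemma mem_shapeCells_replicate {m n : ℕ} {c : ℕ × ℕ} :
    c ∈ shapeCells (List.replicate m n) ↔ c.1 < m ∧ c.2 < n := by
  rw [mem_shapeCells, List.length_replicate]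
  refine and_congr_right fun h => ?_
  rw [List.getD_eq_getElem _ _ (by simpa), List.getElem_replicate]

lemma isLowerSet_shapeCells_replicate {m n : ℕ} :
    IsLowerSet (shapeCells (List.replicate m n) : Set (ℕ × ℕ)) := fun c c' hc'c hc => by
  simp only [mem_coe, mem_shapeCells_replicate] at hc ⊢
  exact ⟨hc'c.1.trans_lt hc.1, hc'c.2.trans_lt hc.2⟩

lemma isLowerSet_of_succ_mem {L : Set (ℕ × ℕ)} (hrow : ∀ i j, (i, j + 1) ∈ L → (i, j) ∈ L)
    (hcol : ∀ i j, (i + 1, j) ∈ L → (i, j) ∈ L) : IsLowerSet L := by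
  rintro ⟨i, j⟩ ⟨i', j'⟩ ⟨hi, hj⟩ h
  have hr (i : ℕ) : Antitone fun j => (i, j) ∈ L := antitone_nat_of_succ_le (hrow i)
  have hc (j : ℕ) : Antitone fun i => (i, j) ∈ L := antitone_nat_of_succ_le fun i => hcol i j
  exact hr i' hj (hc j hi h)

lemma getD_sortDesc {s : Finset ℕ} {k i : ℕ} (hk : #s = k) (hi : i < k) :
    (sortDesc s).getD i 0 = s.orderEmbOfFin hk ⟨k - 1 - i, by omega⟩ := by
  subst hk
  rw [sortDesc, List.getD_eq_getElem _ _ (by simpa), List.getElem_reverse, orderEmbOfFin_apply]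
  simp only [length_sort]
  rfl

lemma strictAntiOn_getD_sortDesc (s : Finset ℕ) :
    StrictAntiOn (fun i => (sortDesc s).getD i 0) (Set.Iio #s) := by
  intro i hi j hj hij
  simp only [Set.mem_Iio] at hi hj
  show (sortDesc s).getD j 0 < (sortDesc s).getD i 0
  rw [getD_sortDesc rfl hi, getD_sortDesc rfl hj]
  exact (s.orderEmbOfFin rfl).strictMono (Fin.mk_lt_mk.2 (by omega))

lemma image_getD_sortDesc (s : Finset ℕ) :
    (range #s).image (fun i => (sortDesc s).getD i 0) = s := by
  ext x
  rw [mem_image, ← mem_coe, ← range_orderEmbOfFin s rfl]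
  constructor
  · rintro ⟨i, hi, rfl⟩
    rw [mem_range] at hi
    exact ⟨_, (getD_sortDesc rfl hi).symm⟩
  · rintro ⟨⟨k, hk⟩, rfl⟩
    refine ⟨#s - 1 - k, mem_range.2 (by omega), ?_⟩
    rw [getD_sortDesc rfl (by omega)]
    congr 2
    omega

lemma getD_sortDesc_image {g : ℕ → ℕ} {k i : ℕ} (hg : StrictAntiOn g (Set.Iio k)) (hi : i < k) :
    (sortDesc ((range k).image g)).getD i 0 = g i := by
  have hcard : #((range k).image g) = k := by
    rw [card_image_of_injOn (hg.injOn.mono (by simp)), card_range]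
  have huniq := orderEmbOfFin_unique hcard (f := fun a => g (k - 1 - a))
    (fun a => mem_image_of_mem g (mem_range.2 (by omega)))
    (fun a b hab => hg (Set.mem_Iio.2 (by omega)) (Set.mem_Iio.2 (by omega))
      (by have := Fin.lt_def.1 hab; omega))
  rw [getD_sortDesc hcard hi, ← congrFun huniq]
  show g (k - 1 - (k - 1 - i)) = g i
  congr 1
  omega

lemma lt_apply_iff_lt_card_filter {f : ℕ → ℕ} {m i : ℕ} (K : ℕ) (hf : StrictAntiOn f (Set.Iio m))
    (hi : i < m) : K < f i ↔ i < #{x ∈ (range m).image f | K < x} := by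
  rw [filter_image, card_image_of_injOn (hf.injOn.mono fun j hj => by
    simp only [coe_filter, mem_range] at hj; exact hj.1)]
  constructor
  · intro h
    have : range (i + 1) ⊆ {j ∈ range m | K < f j} := fun j hj => by
      simp only [mem_range, mem_filter] at hj ⊢
      exact ⟨by omega, h.trans_le (hf.antitoneOn (Set.mem_Iio.2 (by omega))
        (Set.mem_Iio.2 (by omega)) (by omega))⟩
    simpa using card_le_card this
  · intro h
    by_contra h'
    have : {j ∈ range m | K < f j} ⊆ range i := fun j hj => by
      simp only [mem_range, mem_filter] at hj ⊢
      by_contra hij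
      exact h' (hj.2.trans_le (hf.antitoneOn (Set.mem_Iio.2 (by omega))
        (Set.mem_Iio.2 (by omega)) (by omega)))
    have := card_le_card this
    rw [card_range] at this
    omega

lemma sub_le_getD_sortDesc {s : Finset ℕ} (hs : 0 ∉ s) {i : ℕ} (hi : i < #s) :
    #s - i ≤ (sortDesc s).getD i 0 := by
  have hlt := (lt_apply_iff_lt_card_filter (#s - i - 1) (strictAntiOn_getD_sortDesc s) hi).2
  rw [image_getD_sortDesc] at hlt
  have hsmall : #{x ∈ s | ¬ #s - i - 1 < x} ≤ #s - i - 1 := by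
    calc #{x ∈ s | ¬ #s - i - 1 < x} ≤ #(Icc 1 (#s - i - 1)) := card_le_card fun x hx => by
          simp only [mem_filter, mem_Icc] at hx ⊢
          exact ⟨Nat.pos_of_ne_zero fun h => hs (h ▸ hx.1), by omega⟩
      _ = #s - i - 1 := by simp
  have := card_filter_add_card_filter_not (s := s) (fun x => #s - i - 1 < x)
  have := hlt (by omega)
  omega

lemma mem_shapeCells_partOf {m : ℕ} {s : Finset ℕ} {i j : ℕ} :
    (i, j) ∈ shapeCells (partOf m s) ↔ i < m ∧ j + (m - i) < (sortDesc s).getD i 0 := by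
  rw [mem_shapeCells]
  dsimp only
  rw [partOf, List.length_map, List.length_range]
  refine and_congr_right fun hi => ?_
  rw [List.getD_eq_getElem _ _ (by simpa), List.getElem_map, List.getElem_range]
  omega

lemma mem_shapeCells_partOf_iff_lt_card {m : ℕ} {s : Finset ℕ} (hs : #s = m) {i j : ℕ} :
    (i, j) ∈ shapeCells (partOf m s) ↔ i < m ∧ i < #{x ∈ s | j + (m - i) < x} := by
  rw [mem_shapeCells_partOf]
  refine and_congr_right fun hi => ?_
  have := lt_apply_iff_lt_card_filter (j + (m - i)) (strictAntiOn_getD_sortDesc s) (hs ▸ hi)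
  rwa [image_getD_sortDesc] at this

lemma shapeCells_partOf_subset_replicate {m n : ℕ} {s : Finset ℕ} (hs : s ⊆ Icc 1 (m + n))
    (hcard : #s = m) :
    shapeCells (partOf m s) ⊆ shapeCells (List.replicate m n) := by
  rintro ⟨i, j⟩ h
  rw [mem_shapeCells_partOf_iff_lt_card hcard] at h
  rw [mem_shapeCells_replicate]
  have hle : #{x ∈ s | j + (m - i) < x} ≤ #(Ioc (j + (m - i)) (m + n)) :=
    card_le_card fun x hx => by
      rw [mem_filter] at hx
      have := mem_Icc.1 (hs hx.1)
      exact mem_Ioc.2 ⟨hx.2, this.2⟩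
  rw [Nat.card_Ioc] at hle
  omega

lemma isLowerSet_shapeCells_partOf {m : ℕ} {s : Finset ℕ} (hs : #s = m) :
    IsLowerSet (shapeCells (partOf m s) : Set (ℕ × ℕ)) := by
  refine isLowerSet_of_succ_mem (fun i j h => ?_) (fun i j h => ?_) <;>
    simp only [mem_coe, mem_shapeCells_partOf] at h ⊢
  · omega
  · have := strictAntiOn_getD_sortDesc s (a := i) (b := i + 1)
      (by simp only [Set.mem_Iio]; omega) (by simp only [Set.mem_Iio]; omega) (by omega)
    dsimp only at this
    omega

lemma sum_range_tsub_eq_choose_two (m : ℕ) : ∑ i ∈ range m, (m - i) = (m + 1).choose 2 := by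
  induction m with
  | zero => rfl
  | succ m ih =>
    rw [sum_range_succ', Nat.choose_succ_succ (m + 1) 1, ← ih, Nat.choose_one_right]
    simp only [Nat.add_sub_add_right, Nat.sub_zero]
    omega

lemma card_shapeCells_partOf_add_choose {m : ℕ} {s : Finset ℕ} (hs : 0 ∉ s) (hcard : #s = m) :
    #(shapeCells (partOf m s)) + (m + 1).choose 2 = s.sum id := by
  have hsum : s.sum id = ∑ i ∈ range m, (sortDesc s).getD i 0 := by
    conv_lhs => rw [← image_getD_sortDesc s]
    rw [sum_image ((strictAntiOn_getD_sortDesc s).injOn.mono (by simp)), hcard]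
    rfl
  have hpart : (partOf m s).sum = ∑ i ∈ range m, ((sortDesc s).getD i 0 - (m - i)) := rfl
  rw [card_shapeCells, hpart, hsum, ← sum_range_tsub_eq_choose_two, ← sum_add_distrib]
  refine sum_congr rfl fun i hi => ?_
  have := sub_le_getD_sortDesc hs (hcard ▸ mem_range.1 hi : i < #s)
  omega

lemma shapeCells_partOf_injOn (m : ℕ) :
    Set.InjOn (fun s => shapeCells (partOf m s)) {s | 0 ∉ s ∧ #s = m} := by
  rintro s ⟨hs0, hs⟩ s' ⟨hs0', hs'⟩ h
  have hrow (i : ℕ) (hi : i < m) : (sortDesc s).getD i 0 = (sortDesc s').getD i 0 := by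
    have hmem (j : ℕ) :
        j + (m - i) < (sortDesc s).getD i 0 ↔ j + (m - i) < (sortDesc s').getD i 0 := by
      simpa [mem_shapeCells_partOf, hi] using congrArg ((i, j) ∈ ·) h
    have := sub_le_getD_sortDesc hs0 (hs ▸ hi)
    have := sub_le_getD_sortDesc hs0' (hs' ▸ hi)
    have := hmem ((sortDesc s).getD i 0 - (m - i))
    have := hmem ((sortDesc s').getD i 0 - (m - i))
    omega
  rw [← image_getD_sortDesc s, ← image_getD_sortDesc s', hs, hs']
  exact image_congr fun i hi => hrow i (by simpa using hi)

lemma exists_shapeCells_partOf_eq {m n : ℕ} {L : Finset (ℕ × ℕ)}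
    (hbox : ∀ c ∈ L, c.1 < m ∧ c.2 < n) (hL : IsLowerSet (L : Set (ℕ × ℕ))) :
    ∃ s ⊆ Icc 1 (m + n), #s = m ∧ shapeCells (partOf m s) = L := by
  have hrow (i : ℕ) : ∃ a ≤ n, ∀ j, (i, j) ∈ L ↔ j < a := by
    have hn : (i, n) ∉ L := fun h => lt_irrefl n (hbox _ h).2
    have hex : ∃ a, (i, a) ∉ L := ⟨n, hn⟩
    refine ⟨Nat.find hex, Nat.find_min' hex hn, fun j => ⟨fun h => ?_, fun h => ?_⟩⟩
    · by_contra hle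
      exact Nat.find_spec hex (hL (show (i, Nat.find hex) ≤ (i, j) from ⟨le_rfl, by omega⟩) h)
    · by_contra hj
      exact Nat.find_min hex h hj
  choose a ha_le ha using hrow
  have ha_anti : Antitone a := antitone_nat_of_succ_le fun i => by
    by_contra! h
    have := (ha i (a i)).1
      (hL (show (i, a i) ≤ (i + 1, a i) from ⟨by omega, le_rfl⟩) ((ha _ _).2 h))
    omega
  have hg : StrictAntiOn (fun i => a i + (m - i)) (Set.Iio m) := fun i hi j hj hij => by
    simp only [Set.mem_Iio] at hi hj
    have := ha_anti hij.le
    dsimp only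
    omega
  refine ⟨(range m).image fun i => a i + (m - i), fun x hx => ?_, ?_, ?_⟩
  · obtain ⟨i, hi, rfl⟩ := mem_image.1 hx
    have := ha_le i
    simp only [mem_range, mem_Icc] at hi ⊢
    omega
  · rw [card_image_of_injOn (hg.injOn.mono (by simp)), card_range]
  · ext ⟨i, j⟩
    rw [mem_shapeCells_partOf]
    by_cases hi : i < m
    · rw [getD_sortDesc_image hg hi, ha]
      omega
    · exact iff_of_false (fun h => hi h.1) fun h => hi (hbox _ h).1

def boxFlip (m n : ℕ) (c : ℕ × ℕ) : ℕ × ℕ := (m - 1 - c.2, n - 1 - c.1)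

lemma boxFlip_boxFlip {m n : ℕ} {c : ℕ × ℕ} (h₁ : c.1 < m) (h₂ : c.2 < n) :
    boxFlip m n (boxFlip n m c) = c := by
  simp only [boxFlip]
  ext <;> omega

lemma boxFlip_eq_of_succ_snd {m n p q : ℕ} (hq : q + 1 < m) :
    boxFlip m n (p, q) = ((boxFlip m n (p, q + 1)).1 + 1, (boxFlip m n (p, q + 1)).2) := by
  simp only [boxFlip]
  ext <;> omega

lemma boxFlip_eq_of_succ_fst {m n p q : ℕ} (hp : p + 1 < n) :
    boxFlip m n (p, q) = ((boxFlip m n (p + 1, q)).1, (boxFlip m n (p + 1, q)).2 + 1) := by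
  simp only [boxFlip]
  ext <;> omega

def IsBoxFlip (m n : ℕ) (X Y : Finset (ℕ × ℕ)) : Prop :=
  ∀ d, d ∈ Y ↔ d.1 < n ∧ d.2 < m ∧ boxFlip m n d ∈ X

lemma IsBoxFlip.leftInvOn {m n : ℕ} {X Y : Finset (ℕ × ℕ)} (h : IsBoxFlip m n X Y) :
    Set.LeftInvOn (boxFlip n m) (boxFlip m n) Y := fun d hd =>
  boxFlip_boxFlip ((h d).1 hd).1 ((h d).1 hd).2.1

lemma IsBoxFlip.symm {m n : ℕ} {X Y : Finset (ℕ × ℕ)} (h : IsBoxFlip m n X Y)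
    (hX : ∀ c ∈ X, c.1 < m ∧ c.2 < n) : IsBoxFlip n m Y X := by
  intro c
  constructor
  · intro hc
    obtain ⟨hi, hj⟩ := hX c hc
    refine ⟨hi, hj, (h _).2 ⟨?_, ?_, by rwa [boxFlip_boxFlip hi hj]⟩⟩ <;>
      simp only [boxFlip] <;> omega
  · rintro ⟨hi, hj, hc⟩
    simpa only [boxFlip_boxFlip hi hj] using ((h _).1 hc).2.2

lemma isBoxFlip_sdiff_shapeCells_partOf {m n : ℕ} {s : Finset ℕ} (hs : s ⊆ Icc 1 (m + n))
    (hcard : #s = m) :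
    IsBoxFlip m n (shapeCells (List.replicate m n) \ shapeCells (partOf m s))
      (shapeCells (partOf n (Icc 1 (m + n) \ s))) := by
  have hcard' : #(Icc 1 (m + n) \ s) = n := by
    rw [card_sdiff_of_subset hs, Nat.card_Icc, hcard]
    omega
  have hcount (K : ℕ) : #{y ∈ Icc 1 (m + n) \ s | K < y} + #{x ∈ s | K < x} = m + n - K := by
    have hsdiff :
        {y ∈ Icc 1 (m + n) \ s | K < y} = {y ∈ Icc 1 (m + n) | K < y} \ {x ∈ s | K < x} := by
      ext; simp only [mem_filter, mem_sdiff]; tauto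
    have hIoc : {y ∈ Icc 1 (m + n) | K < y} = Ioc K (m + n) := by
      ext; simp only [mem_filter, mem_Icc, mem_Ioc]; omega
    rw [hsdiff, card_sdiff_add_card_eq_card (filter_subset_filter _ hs), hIoc, Nat.card_Ioc]
  rintro ⟨p, q⟩
  rw [mem_sdiff, mem_shapeCells_replicate, mem_shapeCells_partOf_iff_lt_card hcard', boxFlip,
    mem_shapeCells_partOf_iff_lt_card hcard]
  dsimp only
  have := hcount (q + (n - p))
  by_cases hpq : p < n ∧ q < m
  · rw [show n - 1 - p + (m - (m - 1 - q)) = q + (n - p) by omega]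
    omega
  · omega

section Tableaux

variable {S L : Finset (ℕ × ℕ)} {T T₁ T₂ : ℕ × ℕ → ℕ}

lemma IsSYT.one_le (hT : IsSYT S T) {c : ℕ × ℕ} (hc : c ∈ S) : 1 ≤ T c := (hT.1.mapsTo hc).1

lemma IsSYT.le_card (hT : IsSYT S T) {c : ℕ × ℕ} (hc : c ∈ S) : T c ≤ #S := (hT.1.mapsTo hc).2

lemma isSYT_of_injOn (hmaps : Set.MapsTo T S (Set.Icc 1 #S)) (hinj : Set.InjOn T S)
    (hzero : ∀ c, c ∉ S → T c = 0)
    (hrow : ∀ c ∈ S, (c.1, c.2 + 1) ∈ S → T c < T (c.1, c.2 + 1))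
    (hcol : ∀ c ∈ S, (c.1 + 1, c.2) ∈ S → T c < T (c.1 + 1, c.2)) : IsSYT S T := by
  refine ⟨⟨hmaps, hinj, ?_⟩, hzero, hrow, hcol⟩
  rw [← coe_Icc]
  exact surjOn_of_injOn_of_card_le T (by rwa [coe_Icc]) hinj (by simp)

instance (S : Finset (ℕ × ℕ)) : Finite {T : ℕ × ℕ → ℕ // IsSYT S T} := by
  refine Finite.of_injective (fun T (c : S) => (⟨T.1 c, Nat.lt_succ_of_le (T.2.le_card c.2)⟩ :
    Fin (#S + 1))) fun T T' h => Subtype.ext (funext fun c => ?_)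
  by_cases hc : c ∈ S
  · simpa using congrFun h ⟨c, hc⟩
  · rw [T.2.2.1 c hc, T'.2.2.1 c hc]

lemma IsSYT.card_filter_le (hT : IsSYT S T) {t : ℕ} (ht : t ≤ #S) : #{c ∈ S | T c ≤ t} = t := by
  refine (card_nbij (t := Icc 1 t) T (fun c hc => ?_) (hT.1.injOn.mono (filter_subset _ S))
    fun v hv => ?_).trans (by simp)
  · simp only [coe_filter, coe_Icc, Set.mem_Icc] at hc ⊢
    exact ⟨hT.one_le hc.1, hc.2⟩
  · simp only [coe_Icc, Set.mem_Icc] at hv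
    obtain ⟨c, hc, rfl⟩ := hT.1.surjOn ⟨hv.1, hv.2.trans ht⟩
    exact ⟨c, by simpa using ⟨hc, hv.2⟩, rfl⟩

lemma lt_of_mem_sdiff_of_filter_le_eq (hfib : {c ∈ S | T c ≤ #L} = L) {c : ℕ × ℕ}
    (hc : c ∈ S \ L) : #L < T c := by
  rw [mem_sdiff, ← hfib, mem_filter] at hc
  exact not_le.1 fun h => hc.2 ⟨hc.1, h⟩

lemma IsSYT.lowerPart (hT : IsSYT S T) (hLS : L ⊆ S) (hfib : {c ∈ S | T c ≤ #L} = L) :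
    IsSYT L (L.piecewise T 0) := by
  have hmem {c : ℕ × ℕ} (hc : c ∈ L) : c ∈ S ∧ T c ≤ #L := by
    rw [← hfib] at hc; exact mem_filter.1 hc
  refine isSYT_of_injOn (fun c hc => ?_) (fun c hc c' hc' h => ?_) (fun c hc => ?_)
    (fun c hc hc' => ?_) (fun c hc hc' => ?_)
  · rw [mem_coe] at hc
    rw [piecewise_eq_of_mem _ _ _ hc]
    exact ⟨hT.one_le (hmem hc).1, (hmem hc).2⟩
  · rw [mem_coe] at hc hc'
    rw [piecewise_eq_of_mem _ _ _ hc, piecewise_eq_of_mem _ _ _ hc'] at h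
    exact hT.1.injOn (hLS hc) (hLS hc') h
  · rw [piecewise_eq_of_notMem _ _ _ hc, Pi.zero_apply]
  · rw [piecewise_eq_of_mem _ _ _ hc, piecewise_eq_of_mem _ _ _ hc']
    exact hT.2.2.1 c (hLS hc) (hLS hc')
  · rw [piecewise_eq_of_mem _ _ _ hc, piecewise_eq_of_mem _ _ _ hc']
    exact hT.2.2.2 c (hLS hc) (hLS hc')

lemma IsSYT.upperPart (hT : IsSYT S T) (hLS : L ⊆ S) (hfib : {c ∈ S | T c ≤ #L} = L) :
    IsSYT (S \ L) ((S \ L).piecewise (fun c => T c - #L) 0) := by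
  have hgt {c : ℕ × ℕ} (hc : c ∈ S \ L) : #L < T c := lt_of_mem_sdiff_of_filter_le_eq hfib hc
  have hS {c : ℕ × ℕ} (hc : c ∈ S \ L) : c ∈ S := (mem_sdiff.1 hc).1
  refine isSYT_of_injOn (fun c hc => ?_) (fun c hc c' hc' h => ?_) (fun c hc => ?_)
    (fun c hc hc' => ?_) (fun c hc hc' => ?_)
  · rw [mem_coe] at hc
    rw [piecewise_eq_of_mem _ _ _ hc, card_sdiff_of_subset hLS]
    have := hgt hc
    have := hT.le_card (hS hc)
    exact ⟨by omega, by omega⟩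
  · rw [mem_coe] at hc hc'
    rw [piecewise_eq_of_mem _ _ _ hc, piecewise_eq_of_mem _ _ _ hc'] at h
    have := hgt hc
    have := hgt hc'
    exact hT.1.injOn (hS hc) (hS hc') (by omega)
  · rw [piecewise_eq_of_notMem _ _ _ hc, Pi.zero_apply]
  · rw [piecewise_eq_of_mem _ _ _ hc, piecewise_eq_of_mem _ _ _ hc']
    have := hgt hc
    have := hT.2.2.1 c (hS hc) (hS hc')
    omega
  · rw [piecewise_eq_of_mem _ _ _ hc, piecewise_eq_of_mem _ _ _ hc']
    have := hgt hc
    have := hT.2.2.2 c (hS hc) (hS hc')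
    omega

def glueTableaux (S L : Finset (ℕ × ℕ)) (T₁ T₂ : ℕ × ℕ → ℕ) : ℕ × ℕ → ℕ :=
  L.piecewise T₁ (S.piecewise (fun c => T₂ c + #L) 0)

lemma glueTableaux_of_mem {c : ℕ × ℕ} (hc : c ∈ L) : glueTableaux S L T₁ T₂ c = T₁ c :=
  piecewise_eq_of_mem _ _ _ hc

lemma glueTableaux_of_mem_sdiff {c : ℕ × ℕ} (hc : c ∈ S \ L) :
    glueTableaux S L T₁ T₂ c = T₂ c + #L := by
  rw [mem_sdiff] at hc
  rw [glueTableaux, piecewise_eq_of_notMem _ _ _ hc.2, piecewise_eq_of_mem _ _ _ hc.1]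

lemma glueTableaux_of_notMem (hLS : L ⊆ S) {c : ℕ × ℕ} (hc : c ∉ S) :
    glueTableaux S L T₁ T₂ c = 0 := by
  rw [glueTableaux, piecewise_eq_of_notMem _ _ _ (fun h => hc (hLS h)),
    piecewise_eq_of_notMem _ _ _ hc, Pi.zero_apply]

lemma glueTableaux_lt_of_mem_of_mem_sdiff (h₁ : IsSYT L T₁) (h₂ : IsSYT (S \ L) T₂)
    {c c' : ℕ × ℕ} (hc : c ∈ L) (hc' : c' ∈ S \ L) :
    glueTableaux S L T₁ T₂ c < glueTableaux S L T₁ T₂ c' := by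
  rw [glueTableaux_of_mem hc, glueTableaux_of_mem_sdiff hc']
  have := h₁.le_card hc
  have := h₂.one_le hc'
  omega

lemma IsSYT.glue (h₁ : IsSYT L T₁) (h₂ : IsSYT (S \ L) T₂) (hLS : L ⊆ S)
    (hL : IsLowerSet (L : Set (ℕ × ℕ))) : IsSYT S (glueTableaux S L T₁ T₂) := by
  have hU {c : ℕ × ℕ} (hc : c ∈ S) (hcL : c ∉ L) : c ∈ S \ L := mem_sdiff.2 ⟨hc, hcL⟩
  have hlt {c c' : ℕ × ℕ} (hc : c ∈ S) (hc' : c' ∈ S) (hcc' : c ≤ c')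
      (hlow : c ∈ L → c' ∈ L → T₁ c < T₁ c') (hup : c ∈ S \ L → c' ∈ S \ L → T₂ c < T₂ c') :
      glueTableaux S L T₁ T₂ c < glueTableaux S L T₁ T₂ c' := by
    by_cases hc'L : c' ∈ L
    · have hcL : c ∈ L := hL hcc' hc'L
      rw [glueTableaux_of_mem hcL, glueTableaux_of_mem hc'L]
      exact hlow hcL hc'L
    by_cases hcL : c ∈ L
    · exact glueTableaux_lt_of_mem_of_mem_sdiff h₁ h₂ hcL (hU hc' hc'L)
    · rw [glueTableaux_of_mem_sdiff (hU hc hcL), glueTableaux_of_mem_sdiff (hU hc' hc'L)]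
      exact Nat.add_lt_add_right (hup (hU hc hcL) (hU hc' hc'L)) _
  refine isSYT_of_injOn (fun c hc => ?_) (fun c hc c' hc' h => ?_)
    (fun c hc => glueTableaux_of_notMem hLS hc) (fun c hc hc' => ?_) (fun c hc hc' => ?_)
  · rw [mem_coe] at hc
    by_cases hcL : c ∈ L
    · rw [glueTableaux_of_mem hcL]
      exact ⟨h₁.one_le hcL, (h₁.le_card hcL).trans (card_le_card hLS)⟩
    · rw [glueTableaux_of_mem_sdiff (hU hc hcL)]
      have h₂c := h₂.le_card (hU hc hcL)
      rw [card_sdiff_of_subset hLS] at h₂c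
      have := h₂.one_le (hU hc hcL)
      have := card_le_card hLS
      exact ⟨by omega, by omega⟩
  · rw [mem_coe] at hc hc'
    by_cases hcL : c ∈ L <;> by_cases hc'L : c' ∈ L
    · rw [glueTableaux_of_mem hcL, glueTableaux_of_mem hc'L] at h
      exact h₁.1.injOn hcL hc'L h
    · exact absurd h (glueTableaux_lt_of_mem_of_mem_sdiff h₁ h₂ hcL (hU hc' hc'L)).ne
    · exact absurd h (glueTableaux_lt_of_mem_of_mem_sdiff h₁ h₂ hc'L (hU hc hcL)).ne'
    · rw [glueTableaux_of_mem_sdiff (hU hc hcL), glueTableaux_of_mem_sdiff (hU hc' hc'L)] at h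
      exact h₂.1.injOn (hU hc hcL) (hU hc' hc'L) (Nat.add_right_cancel h)
  · exact hlt hc hc' ⟨le_rfl, Nat.le_succ _⟩ (h₁.2.2.1 c) (h₂.2.2.1 c)
  · exact hlt hc hc' ⟨Nat.le_succ _, le_rfl⟩ (h₁.2.2.2 c) (h₂.2.2.2 c)

lemma filter_glueTableaux_le (h₁ : IsSYT L T₁) (h₂ : IsSYT (S \ L) T₂) (hLS : L ⊆ S) :
    {c ∈ S | glueTableaux S L T₁ T₂ c ≤ #L} = L := by
  ext c
  rw [mem_filter]
  refine ⟨fun ⟨hc, hle⟩ => ?_, fun hc => ⟨hLS hc, ?_⟩⟩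
  · by_contra hcL
    rw [glueTableaux_of_mem_sdiff (mem_sdiff.2 ⟨hc, hcL⟩)] at hle
    have := h₂.one_le (mem_sdiff.2 ⟨hc, hcL⟩)
    omega
  · rw [glueTableaux_of_mem hc]
    exact h₁.le_card hc

def sytFiberEquiv (hLS : L ⊆ S) (hL : IsLowerSet (L : Set (ℕ × ℕ))) :
    {T : {T // IsSYT S T} // {c ∈ S | T.1 c ≤ #L} = L} ≃
      {T // IsSYT L T} × {T // IsSYT (S \ L) T} where
  toFun T := (⟨_, T.1.2.lowerPart hLS T.2⟩, ⟨_, T.1.2.upperPart hLS T.2⟩)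
  invFun P := ⟨⟨_, P.1.2.glue P.2.2 hLS hL⟩, filter_glueTableaux_le P.1.2 P.2.2 hLS⟩
  left_inv T := by
    refine Subtype.ext (Subtype.ext (funext fun c => ?_))
    dsimp only
    by_cases hcL : c ∈ L
    · rw [glueTableaux_of_mem hcL, piecewise_eq_of_mem _ _ _ hcL]
    by_cases hc : c ∈ S
    · have hcU := mem_sdiff.2 ⟨hc, hcL⟩
      have := lt_of_mem_sdiff_of_filter_le_eq T.2 hcU
      rw [glueTableaux_of_mem_sdiff hcU, piecewise_eq_of_mem _ _ _ hcU]
      omega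
    · rw [glueTableaux_of_notMem hLS hc, T.1.2.2.1 c hc]
  right_inv P := by
    refine Prod.ext (Subtype.ext (funext fun c => ?_)) (Subtype.ext (funext fun c => ?_)) <;>
      dsimp only
    · by_cases hcL : c ∈ L
      · exact (piecewise_eq_of_mem _ _ _ hcL).trans (glueTableaux_of_mem hcL)
      · rw [piecewise_eq_of_notMem _ _ _ hcL, P.1.2.2.1 c hcL, Pi.zero_apply]
    · by_cases hcU : c ∈ S \ L
      · rw [piecewise_eq_of_mem _ _ _ hcU, glueTableaux_of_mem_sdiff hcU, Nat.add_sub_cancel]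
      · rw [piecewise_eq_of_notMem _ _ _ hcU, P.2.2.2.1 c hcU, Pi.zero_apply]

lemma IsSYT.isLowerSet_filter_le (hT : IsSYT S T)
    (hS : IsLowerSet (S : Set (ℕ × ℕ))) (t : ℕ) :
    IsLowerSet (↑({c ∈ S | T c ≤ t} : Finset (ℕ × ℕ)) : Set (ℕ × ℕ)) := by
  refine isLowerSet_of_succ_mem (fun i j h => ?_) (fun i j h => ?_) <;>
    rw [mem_coe, mem_filter] at h ⊢
  · have hS' : (i, j) ∈ S := hS (show (i, j) ≤ (i, j + 1) from ⟨le_rfl, Nat.le_succ j⟩) h.1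
    exact ⟨hS', (hT.2.2.1 (i, j) hS' h.1).le.trans h.2⟩
  · have hS' : (i, j) ∈ S := hS (show (i, j) ≤ (i + 1, j) from ⟨Nat.le_succ i, le_rfl⟩) h.1
    exact ⟨hS', (hT.2.2.2 (i, j) hS' h.1).le.trans h.2⟩

end Tableaux

def flipTableau (m n : ℕ) (Y : Finset (ℕ × ℕ)) (T : ℕ × ℕ → ℕ) : ℕ × ℕ → ℕ :=
  Y.piecewise (fun d => #Y + 1 - T (boxFlip m n d)) 0

section Flip

variable {m n : ℕ} {X Y : Finset (ℕ × ℕ)} {T : ℕ × ℕ → ℕ}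

lemma IsBoxFlip.card_eq (hY : IsBoxFlip m n X Y) (hX : IsBoxFlip n m Y X) : #Y = #X :=
  card_nbij' (boxFlip m n) (boxFlip n m) (fun d hd => ((hY d).1 hd).2.2)
    (fun c hc => ((hX c).1 hc).2.2)
    hY.leftInvOn hX.leftInvOn

lemma IsSYT.flip (hT : IsSYT X T) (hY : IsBoxFlip m n X Y) (hX : IsBoxFlip n m Y X) :
    IsSYT Y (flipTableau m n Y T) := by
  have hcard := hY.card_eq hX
  have hval {d : ℕ × ℕ} (hd : d ∈ Y) : flipTableau m n Y T d = #Y + 1 - T (boxFlip m n d) :=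
    piecewise_eq_of_mem _ _ _ hd
  have hmem {d : ℕ × ℕ} (hd : d ∈ Y) : boxFlip m n d ∈ X := ((hY d).1 hd).2.2
  have hle {d : ℕ × ℕ} (hd : d ∈ Y) : T (boxFlip m n d) ≤ #Y := hcard ▸ hT.le_card (hmem hd)
  refine isSYT_of_injOn (fun d hd => ?_) (fun d hd d' hd' h => ?_)
    (fun d hd => piecewise_eq_of_notMem _ _ _ hd) (fun d hd hd' => ?_) (fun d hd hd' => ?_)
  · rw [mem_coe] at hd
    have := hT.one_le (hmem hd)
    have := hle hd
    rw [hval hd]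
    exact ⟨by omega, by omega⟩
  · rw [mem_coe] at hd hd'
    rw [hval hd, hval hd'] at h
    have := hT.one_le (hmem hd)
    have := hT.one_le (hmem hd')
    have := hle hd
    have := hle hd'
    have := hT.1.injOn (hmem hd) (hmem hd') (by omega)
    rw [← hY.leftInvOn hd, ← hY.leftInvOn hd', this]
  · have hup := boxFlip_eq_of_succ_snd (n := n) (p := d.1) ((hY _).1 hd').2.1
    have := hT.2.2.2 _ (hmem hd') (hup ▸ hmem hd)
    rw [← hup, Prod.mk.eta] at this
    rw [hval hd, hval hd']
    have := hle hd
    omega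
  · have hleft := boxFlip_eq_of_succ_fst (m := m) (q := d.2) ((hY _).1 hd').1
    have := hT.2.2.1 _ (hmem hd') (hleft ▸ hmem hd)
    rw [← hleft, Prod.mk.eta] at this
    rw [hval hd, hval hd']
    have := hle hd
    omega

lemma flipTableau_flipTableau (hT : IsSYT X T) (hY : IsBoxFlip m n X Y) (hX : IsBoxFlip n m Y X) :
    flipTableau n m X (flipTableau m n Y T) = T := by
  funext c
  by_cases hc : c ∈ X
  · have hc' := (hX c).1 hc
    have := hT.one_le hc
    have := hT.le_card hc
    rw [flipTableau, piecewise_eq_of_mem _ _ _ hc, flipTableau, piecewise_eq_of_mem _ _ _ hc'.2.2,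
      hX.leftInvOn hc, hY.card_eq hX]
    omega
  · rw [flipTableau, piecewise_eq_of_notMem _ _ _ hc, hT.2.1 c hc, Pi.zero_apply]

def sytFlipEquiv (hY : IsBoxFlip m n X Y) (hX : IsBoxFlip n m Y X) :
    {T // IsSYT X T} ≃ {T // IsSYT Y T} where
  toFun T := ⟨_, T.2.flip hY hX⟩
  invFun T := ⟨_, T.2.flip hX hY⟩
  left_inv T := Subtype.ext (flipTableau_flipTableau T.2 hY hX)
  right_inv T := Subtype.ext (flipTableau_flipTableau T.2 hX hY)

end Flip

lemma card_eq_sum_card_of_existsUnique {α ι : Type*} [Finite α] (I : Finset ι) (P : ι → α → Prop)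
    (h : ∀ a, ∃! i, i ∈ I ∧ P i a) : Nat.card α = ∑ i ∈ I, Nat.card {a // P i a} := by
  classical
  have := Fintype.ofFinite α
  choose g hg hg_unique using h
  rw [Nat.card_eq_fintype_card, ← card_univ,
    card_eq_sum_card_fiberwise (f := g) (t := I) fun a _ => (hg a).1]
  refine sum_congr rfl fun i hi => ?_
  rw [Nat.card_eq_fintype_card, Fintype.card_subtype]
  congr 1
  ext a
  simp only [mem_filter, mem_univ, true_and]
  exact ⟨fun h => h ▸ (hg a).2, fun h => (hg_unique a i ⟨hi, h⟩).symm⟩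

section Rectangle

variable {m n t : ℕ} {s : Finset ℕ}

lemma existsUnique_shapeCells_partOf {T : ℕ × ℕ → ℕ}
    (hT : IsSYT (shapeCells (List.replicate m n)) T) (ht : t ≤ m * n) :
    ∃! s, s ∈ (powersetCard m (Icc 1 (m + n))).filter (fun s => s.sum id = t + (m + 1).choose 2) ∧
      {c ∈ shapeCells (List.replicate m n) | T c ≤ t} = shapeCells (partOf m s) := by
  have hzero {s : Finset ℕ} (hs : s ⊆ Icc 1 (m + n)) : 0 ∉ s := fun h => by simpa using hs h
  obtain ⟨s, hsub, hcard, hs⟩ := exists_shapeCells_partOf_eq (m := m) (n := n)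
    (fun c hc => mem_shapeCells_replicate.1 (mem_filter.1 hc).1)
    (hT.isLowerSet_filter_le isLowerSet_shapeCells_replicate t)
  have hfilter := hT.card_filter_le (t := t)
    (by rwa [card_shapeCells, List.sum_replicate, smul_eq_mul])
  refine ⟨s, ⟨mem_filter.2 ⟨mem_powersetCard.2 ⟨hsub, hcard⟩, ?_⟩, hs.symm⟩, ?_⟩
  · rw [← card_shapeCells_partOf_add_choose (hzero hsub) hcard, hs, hfilter]
  · rintro s' ⟨hs', hfib⟩
    rw [mem_filter, mem_powersetCard] at hs'
    exact shapeCells_partOf_injOn m ⟨hzero hs'.1.1, hs'.1.2⟩ ⟨hzero hsub, hcard⟩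
      (hfib.symm.trans hs.symm)

lemma card_sytFiber_eq_mul (hs : s ⊆ Icc 1 (m + n)) (hcard : #s = m) :
    Nat.card {T : {T // IsSYT (shapeCells (List.replicate m n)) T} //
      {c ∈ shapeCells (List.replicate m n) | T.1 c ≤ #(shapeCells (partOf m s))} =
        shapeCells (partOf m s)} =
      fL (partOf m s) * fL (partOf n (Icc 1 (m + n) \ s)) := by
  have hY := isBoxFlip_sdiff_shapeCells_partOf hs hcard
  have hX := hY.symm fun c hc => mem_shapeCells_replicate.1 (mem_sdiff.1 hc).1
  rw [Nat.card_congr (sytFiberEquiv (shapeCells_partOf_subset_replicate hs hcard)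
    (isLowerSet_shapeCells_partOf hcard)), Nat.card_prod, Nat.card_congr (sytFlipEquiv hY hX)]
  rfl

end Rectangle

/-- `∑_{λ ⊆ (n^m), |λ| = t} f^λ f^{λᶜ} = f^{(n^m)}`, where partitions
`λ` in the `m×n` box are encoded by the set of parts of the strict partition
`λ + (m,…,1)`, an `m`-subset of `{1,…,m+n}`, and `λᶜ + (n,…,1)` is its complement. -/
theorem rectangle_complement_sum (m n t : ℕ) (ht : t ≤ m * n) :
    ∑ s ∈ (Finset.powersetCard m (Finset.Icc 1 (m + n))).filter
        (fun s => s.sum id = t + (m + 1).choose 2),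
      fL (partOf m s) * fL (partOf n (Finset.Icc 1 (m + n) \ s))
    = fL (List.replicate m n) := by
  have hfiber (s : Finset ℕ) (hs : s ∈ (powersetCard m (Icc 1 (m + n))).filter
      (fun s => s.sum id = t + (m + 1).choose 2)) :
      fL (partOf m s) * fL (partOf n (Icc 1 (m + n) \ s)) =
        Nat.card {T : {T // IsSYT (shapeCells (List.replicate m n)) T} //
          {c ∈ shapeCells (List.replicate m n) | T.1 c ≤ t} = shapeCells (partOf m s)} := by
    rw [mem_filter, mem_powersetCard] at hs
    obtain ⟨⟨hsub, hcard⟩, hsum⟩ := hs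
    have hsize := card_shapeCells_partOf_add_choose (fun h => by simpa using hsub h) hcard
    rw [show t = #(shapeCells (partOf m s)) by omega, card_sytFiber_eq_mul hsub hcard]
  rw [sum_congr rfl hfiber,
    ← card_eq_sum_card_of_existsUnique _ _ fun T => existsUnique_shapeCells_partOf T.2 ht]
  rfl
end
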